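/- arXiv:1005.5602 — 9 statements merged into one kernel-verified Lean document; each statement's English description precedes it below -/
import Mathlib

section
/- Let P be a path with vertices v_0,...,v_n, weight function w, and waterfall list assignment L (i.e., L(i) ∩ L(j) = ∅ whenever |i−j| ≥ 2). Then P is (L,w)-colorable (one can choose c(i) ⊆ L(i) with |c(i)| = w(i) and c(i) ∩ c(i+1) = ∅ for all i) if and only if for all 0 ≤ i ≤ j ≤ n, |⋃_{k=i}^{j} L(k)| ≥ Σ_{k=i}^{j} w(k). -/
open Finset

/-- Pick `m` elements of `A`, preferring elements not in `B`. -/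
noncomputable def wfPick (A B : Finset ℕ) (m : ℕ) : Finset ℕ :=
  if h : m ≤ (A \ B).card then (Finset.exists_subset_card_eq h).choose
  else (A \ B) ∪ (if h2 : m - (A \ B).card ≤ (A ∩ B).card then
      (Finset.exists_subset_card_eq h2).choose else A ∩ B)

lemma wfPick_subset (A B : Finset ℕ) (m : ℕ) : wfPick A B m ⊆ A := by
  unfold wfPick
  split_ifs with h h2
  · exact (Finset.exists_subset_card_eq h).choose_spec.1.trans sdiff_subset
  · exact union_subset sdiff_subset
      ((Finset.exists_subset_card_eq h2).choose_spec.1.trans inter_subset_left)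
  · exact union_subset sdiff_subset inter_subset_left

lemma wfPick_card (A B : Finset ℕ) (m : ℕ) (hm : m ≤ A.card) :
    (wfPick A B m).card = m := by
  unfold wfPick
  have hsplit := Finset.card_sdiff_add_card_inter A B
  split_ifs with h h2
  · exact (Finset.exists_subset_card_eq h).choose_spec.2
  · have hsub := (Finset.exists_subset_card_eq h2).choose_spec.1
    have hcard := (Finset.exists_subset_card_eq h2).choose_spec.2
    rw [Finset.card_union_of_disjoint, hcard]
    · omega
    · exact Finset.disjoint_left.2 fun x hx hx2 => by
        have := hsub hx2
        simp only [mem_sdiff, mem_inter] at hx this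
        exact hx.2 this.2
  · omega

lemma wfPick_inter (A B : Finset ℕ) (m : ℕ) (hm : m ≤ A.card) :
    (wfPick A B m ∩ B).card ≤ m - (A \ B).card := by
  unfold wfPick
  have hsplit := Finset.card_sdiff_add_card_inter A B
  split_ifs with h h2
  · have hsub := (Finset.exists_subset_card_eq h).choose_spec.1
    have : (Finset.exists_subset_card_eq h).choose ∩ B = ∅ := by
      apply Finset.eq_empty_of_forall_notMem
      intro x hx
      simp only [mem_inter] at hx
      have := hsub hx.1
      simp only [mem_sdiff] at this
      exact this.2 hx.2
    rw [this]
    simp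
  · have hsub := (Finset.exists_subset_card_eq h2).choose_spec.1
    have hcard := (Finset.exists_subset_card_eq h2).choose_spec.2
    calc (((A \ B) ∪ _) ∩ B).card ≤ ((Finset.exists_subset_card_eq h2).choose).card := by
          apply Finset.card_le_card
          intro x hx
          simp only [mem_inter, mem_union, mem_sdiff] at hx
          rcases hx.1 with h3 | h3
          · exact absurd hx.2 h3.2
          · exact h3
      _ = m - (A \ B).card := hcard
  · omega

/-- Greedy coloring of the path. -/
noncomputable def wfGreedy (L : ℕ → Finset ℕ) (w : ℕ → ℕ) : ℕ → Finset ℕ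
  | 0 => wfPick (L 0) (L 1) (w 0)
  | (i + 1) => wfPick (L (i + 1) \ wfGreedy L w i) (L (i + 2)) (w (i + 1))

lemma Icc_insert_left {i j : ℕ} (hij : i ≤ j) :
    Finset.Icc i j = insert i (Finset.Icc (i + 1) j) := by
  ext x; simp only [mem_Icc, mem_insert]; omega

lemma notMem_Icc_succ (i j : ℕ) : i ∉ Finset.Icc (i + 1) j := by
  simp

/-- Theorem: a weighted path with a waterfall list assignment is (L,w)-colorable iff
the amplitude condition holds on every interval of vertices. -/
theorem waterfall_path_colorable_iff (n : ℕ) (L : ℕ → Finset ℕ) (w : ℕ → ℕ)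
    (hwf : ∀ i j, i ≤ n → j ≤ n → i + 2 ≤ j → Disjoint (L i) (L j)) :
    (∃ c : ℕ → Finset ℕ, (∀ i, i ≤ n → c i ⊆ L i ∧ (c i).card = w i) ∧
        ∀ i, i < n → Disjoint (c i) (c (i + 1))) ↔
      (∀ i j, i ≤ j → j ≤ n →
        ∑ k ∈ Finset.Icc i j, w k ≤ ((Finset.Icc i j).biUnion L).card) := by
  constructor
  · rintro ⟨c, hc, hadj⟩ i j hij hjn
    have hdisj : ∀ k ∈ Finset.Icc i j, ∀ l ∈ Finset.Icc i j, k ≠ l →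
        Disjoint (c k) (c l) := by
      have key : ∀ k l, k ≤ n → l ≤ n → k < l → Disjoint (c k) (c l) := by
        intro k l hk hl hkl
        rcases eq_or_lt_of_le (Nat.succ_le_of_lt hkl) with h | h
        · subst h; exact hadj k (by omega)
        · exact Finset.disjoint_of_subset_left (hc k hk).1
            (Finset.disjoint_of_subset_right (hc l hl).1 (hwf k l hk hl (by omega)))
      intro k hk l hl hne
      simp only [mem_Icc] at hk hl
      rcases lt_or_gt_of_ne hne with h | h
      · exact key k l (by omega) (by omega) h
      · exact (key l k (by omega) (by omega) h).symm
    calc ∑ k ∈ Finset.Icc i j, w k = ∑ k ∈ Finset.Icc i j, (c k).card := by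
          apply Finset.sum_congr rfl
          intro k hk
          simp only [mem_Icc] at hk
          exact ((hc k (by omega)).2).symm
      _ = ((Finset.Icc i j).biUnion c).card := (Finset.card_biUnion hdisj).symm
      _ ≤ ((Finset.Icc i j).biUnion L).card := by
          apply Finset.card_le_card
          intro x hx
          simp only [Finset.mem_biUnion] at hx ⊢
          obtain ⟨k, hk, hxk⟩ := hx
          simp only [mem_Icc] at hk
          exact ⟨k, by simp [mem_Icc]; omega, (hc k (by omega)).1 hxk⟩
  · intro H
    set c := wfGreedy L w with hc
    -- union step: splitting off the left vertex of an interval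
    have union_step : ∀ i j, i < j → j ≤ n →
        ((Finset.Icc i j).biUnion L).card + (L i ∩ L (i + 1)).card =
          (L i).card + ((Finset.Icc (i + 1) j).biUnion L).card := by
      intro i j hij hjn
      have h1 : (Finset.Icc i j).biUnion L = L i ∪ (Finset.Icc (i + 1) j).biUnion L := by
        rw [Icc_insert_left (le_of_lt hij), Finset.biUnion_insert]
      have h2 : L i ∩ (Finset.Icc (i + 1) j).biUnion L = L i ∩ L (i + 1) := by
        apply Finset.Subset.antisymm
        · intro x hx
          simp only [mem_inter, Finset.mem_biUnion, mem_Icc] at hx ⊢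
          obtain ⟨hxi, k, hk, hxk⟩ := hx
          refine ⟨hxi, ?_⟩
          rcases Nat.eq_or_lt_of_le hk.1 with h | h
          · subst h; exact hxk
          · exact absurd hxk (Finset.disjoint_left.1
              (hwf i k (by omega) (by omega) (by omega)) hxi)
        · intro x hx
          simp only [mem_inter, Finset.mem_biUnion, mem_Icc] at hx ⊢
          exact ⟨hx.1, i + 1, ⟨le_refl _, by omega⟩, hx.2⟩
      rw [h1, ← h2, Finset.card_union_add_card_inter]
    -- sum step
    have sum_step : ∀ i j, i ≤ j →
        ∑ k ∈ Finset.Icc i j, w k = w i + ∑ k ∈ Finset.Icc (i + 1) j, w k := by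
      intro i j hij
      rw [Icc_insert_left hij, Finset.sum_insert (notMem_Icc_succ i j)]
    have hsingle : ∀ i : ℕ, Finset.Icc i i = {i} := fun i => Finset.Icc_self i
    -- main invariant, by induction on i
    have main : ∀ i, i ≤ n → (c i).card = w i ∧ c i ⊆ L i ∧
        (∀ j, i < j → j ≤ n →
          (c i ∩ L (i + 1)).card + ∑ k ∈ Finset.Icc (i + 1) j, w k ≤
            ((Finset.Icc (i + 1) j).biUnion L).card) := by
      intro i
      induction i with
      | zero =>
        intro _
        have hw0 : w 0 ≤ (L 0).card := by
          have := H 0 0 (le_refl _) (by omega)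
          simpa [hsingle] using this
        have hsub : c 0 ⊆ L 0 := wfPick_subset _ _ _
        refine ⟨wfPick_card _ _ _ hw0, hsub, ?_⟩
        intro j h0j hjn
        have hd : (c 0 ∩ L 1).card ≤ w 0 - (L 0 \ L 1).card := wfPick_inter _ _ _ hw0
        have hx : (L 0 \ L 1).card + (L 0 ∩ L 1).card = (L 0).card :=
          Finset.card_sdiff_add_card_inter _ _
        have hu := union_step 0 j h0j hjn
        have hs := sum_step 0 j (le_of_lt h0j)
        have hH := H 0 j (by omega) hjn
        have hH2 := H 1 j (by omega) hjn
        simp only [show (0:ℕ)+1 = 1 from rfl] at hu hs ⊢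
        omega
      | succ i ih =>
        intro hin
        obtain ⟨hcard, hsub, hinv⟩ := ih (by omega)
        have hd : (c i ∩ L (i + 1)).card + w (i + 1) ≤ (L (i + 1)).card := by
          have := hinv (i + 1) (by omega) hin
          simpa [hsingle] using this
        have havail : (L (i + 1) \ c i).card + (L (i + 1) ∩ c i).card = (L (i + 1)).card :=
          Finset.card_sdiff_add_card_inter _ _
        have hcomm : (L (i + 1) ∩ c i).card = (c i ∩ L (i + 1)).card := by
          rw [Finset.inter_comm]
        have hw : w (i + 1) ≤ (L (i + 1) \ c i).card := by omega
        have hceq : c (i + 1) = wfPick (L (i + 1) \ c i) (L (i + 2)) (w (i + 1)) := rfl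
        have hcard1 : (c (i + 1)).card = w (i + 1) := by
          rw [hceq]; exact wfPick_card _ _ _ hw
        have hsub1 : c (i + 1) ⊆ L (i + 1) := by
          rw [hceq]
          exact (wfPick_subset _ _ _).trans sdiff_subset
        refine ⟨hcard1, hsub1, ?_⟩
        intro j hij hjn
        have hdnew : (c (i + 1) ∩ L (i + 2)).card ≤
            w (i + 1) - ((L (i + 1) \ c i) \ L (i + 2)).card := by
          rw [hceq]; exact wfPick_inter _ _ _ hw
        -- (L (i+1) \ c i) ∩ L (i+2) = L (i+1) ∩ L (i+2)
        have hinter : (L (i + 1) \ c i) ∩ L (i + 2) = L (i + 1) ∩ L (i + 2) := by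
          apply Finset.Subset.antisymm
          · intro x hx
            simp only [mem_inter, mem_sdiff] at hx ⊢
            exact ⟨hx.1.1, hx.2⟩
          · intro x hx
            simp only [mem_inter, mem_sdiff] at hx ⊢
            refine ⟨⟨hx.1, fun hxc => ?_⟩, hx.2⟩
            exact Finset.disjoint_left.1 (hwf i (i + 2) (by omega) (by omega) (by omega))
              (hsub hxc) hx.2
        have hx2 : ((L (i + 1) \ c i) \ L (i + 2)).card + (L (i + 1) ∩ L (i + 2)).card =
            (L (i + 1) \ c i).card := by
          rw [← hinter]; exact Finset.card_sdiff_add_card_inter _ _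
        have hu := union_step (i + 1) j hij hjn
        have hs := sum_step (i + 1) j (le_of_lt hij)
        have hIH := hinv j (by omega) hjn
        have hH2 := H (i + 2) j (by omega) hjn
        simp only [show i+1+1 = i+2 from rfl] at hu hs hIH ⊢
        omega
    refine ⟨c, fun i hi => ⟨(main i hi).2.1, (main i hi).1⟩, fun i hi => ?_⟩
    have hceq : c (i + 1) = wfPick (L (i + 1) \ c i) (L (i + 2)) (w (i + 1)) := rfl
    have : c (i + 1) ⊆ L (i + 1) \ c i := by rw [hceq]; exact wfPick_subset _ _ _
    exact Finset.disjoint_left.2 fun x hx hx2 => (Finset.mem_sdiff.1 (this hx2)).2 hx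
end

section
/- Let P be the path on vertices 0,...,n with weight w and waterfall list L such that |L(i)| ≥ w(i) + w(i+1) for all 1 ≤ i ≤ n−1 and |L(n)| ≥ w(n). Then P is (L,w)-colorable if and only if for every j ∈ {0,...,n}, |⋃_{k=0}^{j} L(k)| ≥ Σ_{k=0}^{j} w(k). -/
/-!
Necessity: on a waterfall list, consecutive colour classes are disjoint by the colouring and
non-consecutive ones because their lists are, so the classes of `0, …, j` are pairwise disjoint
subsets of `L 0 ∪ ⋯ ∪ L j`.

Sufficiency: colour greedily from `n` down to `0`, giving vertex `k + 1` a `w (k + 1)`-subset of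
`L (k + 1) \ c (k + 2)` that uses as few colours of `L k` as possible. The invariant is that the
colours of `L 0 ∪ ⋯ ∪ L k` not taken by `c (k + 1)` number at least `w 0 + ⋯ + w k`. Goodness
of the list and `w n ≤ |L n|` let every vertex but `0` be coloured, and at vertex `0` the invariant
is exactly what is needed.
-/

open Finset Function

theorem Finset.exists_subset_card_eq_card_inter_le {α : Type*} [DecidableEq α] (A B : Finset α)
    {m : ℕ} (hm : m ≤ #A) : ∃ S ⊆ A, #S = m ∧ #(S ∩ B) ≤ m - #(A \ B) := by
  obtain ⟨T, hTA, hT⟩ := exists_subset_card_eq (min_le_right m #(A \ B))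
  obtain ⟨S, hTS, hSA, hS⟩ :=
    exists_subsuperset_card_eq (hTA.trans sdiff_subset) (hT ▸ min_le_left _ _) hm
  refine ⟨S, hSA, hS, ?_⟩
  have hST : S ∩ B ⊆ S \ T := fun x hx =>
    mem_sdiff.2 ⟨(mem_inter.1 hx).1, fun hxT => (mem_sdiff.1 (hTA hxT)).2 (mem_inter.1 hx).2⟩
  have := card_le_card hST
  rw [card_sdiff_of_subset hTS] at this
  omega

def IsWaterfall (n : ℕ) (L : ℕ → Finset ℕ) : Prop :=
  ∀ i j, i ≤ n → j ≤ n → i + 2 ≤ j → Disjoint (L i) (L j)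

/-- `c` is an `(L, w)`-colouring of the subpath on the vertices `j, …, n`. -/
def IsColoringFrom (L : ℕ → Finset ℕ) (w : ℕ → ℕ) (n j : ℕ) (c : ℕ → Finset ℕ) : Prop :=
  (∀ i, j ≤ i → i ≤ n → c i ⊆ L i ∧ #(c i) = w i) ∧
    ∀ i, j ≤ i → i < n → Disjoint (c i) (c (i + 1))

section

variable {n : ℕ} {L : ℕ → Finset ℕ} {w : ℕ → ℕ}

theorem IsColoringFrom.update {j : ℕ} {c : ℕ → Finset ℕ} (hc : IsColoringFrom L w n (j + 1) c)
    (hj : j ≤ n) {S : Finset ℕ} (hS : S ⊆ L j \ c (j + 1)) (hSw : #S = w j) :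
    IsColoringFrom L w n j (update c j S) := by
  constructor
  · intro i hji hin
    rcases eq_or_ne i j with rfl | hij
    · simpa using ⟨hS.trans sdiff_subset, hSw⟩
    · simpa [hij] using hc.1 i (by omega) hin
  · intro i hji hin
    rcases eq_or_ne i j with rfl | hij
    · simpa using disjoint_sdiff_self_left.mono_left hS
    · simpa [hij, show i + 1 ≠ j by omega] using hc.2 i (by omega) hin

theorem IsWaterfall.sum_le_card_biUnion (hL : IsWaterfall n L) {c : ℕ → Finset ℕ}
    (hc : IsColoringFrom L w n 0 c) {j : ℕ} (hj : j ≤ n) :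
    ∑ k ∈ Icc 0 j, w k ≤ #((Icc 0 j).biUnion L) := by
  have hdisj : ∀ x y, y ≤ n → x < y → Disjoint (c x) (c y) := fun x y hy hxy => by
    rcases eq_or_lt_of_le (Nat.succ_le_of_lt hxy) with rfl | h
    · exact hc.2 x (Nat.zero_le x) hy
    · exact (hL x y (by omega) hy h).mono (hc.1 x (Nat.zero_le x) (by omega)).1
        (hc.1 y (Nat.zero_le y) hy).1
  calc ∑ k ∈ Icc 0 j, w k = ∑ k ∈ Icc 0 j, #(c k) :=
        sum_congr rfl fun k hk => (hc.1 k (Nat.zero_le k) ((mem_Icc.1 hk).2.trans hj)).2.symm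
    _ = #((Icc 0 j).biUnion c) := by
        refine (card_biUnion fun x hx y hy hxy => ?_).symm
        rw [mem_coe, mem_Icc] at hx hy
        rcases lt_or_gt_of_ne hxy with h | h
        · exact hdisj x y (by omega) h
        · exact (hdisj y x (by omega) h).symm
    _ ≤ #((Icc 0 j).biUnion L) :=
        card_le_card <| biUnion_mono fun k hk =>
          (hc.1 k (Nat.zero_le k) ((mem_Icc.1 hk).2.trans hj)).1

theorem IsWaterfall.inter_biUnion_subset (hL : IsWaterfall n L) {k : ℕ} (hk : k + 1 ≤ n) :
    L (k + 1) ∩ (Icc 0 k).biUnion L ⊆ L k := by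
  intro x hx
  obtain ⟨hx, i, hi, hxi⟩ := by simpa only [mem_inter, mem_biUnion] using hx
  rcases eq_or_lt_of_le (mem_Icc.1 hi).2 with rfl | hik
  · exact hxi
  · exact absurd hx (disjoint_left.1 (hL i (k + 1) (by omega) hk (by omega)) hxi)

/-- `C` is the colour class of vertex `k + 2`; the invariant survives because `S` meets `L k`
as little as possible. -/
theorem IsWaterfall.exists_subset_card_eq_sum_le_card_sdiff (hL : IsWaterfall n L) {k : ℕ}
    (hk : k + 1 ≤ n) {C : Finset ℕ} (hfeas : w (k + 1) ≤ #(L (k + 1) \ C))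
    (hamp : ∑ i ∈ Icc 0 k, w i ≤ #((Icc 0 k).biUnion L))
    (hC : ∑ i ∈ Icc 0 (k + 1), w i ≤ #((Icc 0 (k + 1)).biUnion L \ C)) :
    ∃ S ⊆ L (k + 1) \ C, #S = w (k + 1) ∧
      ∑ i ∈ Icc 0 k, w i ≤ #((Icc 0 k).biUnion L \ S) := by
  set U := (Icc 0 k).biUnion L
  set A := L (k + 1) \ C
  obtain ⟨S, hSA, hS, hSk⟩ := exists_subset_card_eq_card_inter_le A (L k) hfeas
  refine ⟨S, hSA, hS, ?_⟩
  have hsplit : (Icc 0 (k + 1)).biUnion L \ C ⊆ U ∪ A \ L k := by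
    intro x hx
    obtain ⟨⟨i, hi, hxi⟩, hxC⟩ := by simpa only [mem_sdiff, mem_biUnion] using hx
    rcases eq_or_lt_of_le (mem_Icc.1 hi).2 with rfl | hik
    · by_cases hxk : x ∈ L k
      · exact mem_union_left _ (mem_biUnion.2 ⟨k, by simp, hxk⟩)
      · exact mem_union_right _ (mem_sdiff.2 ⟨mem_sdiff.2 ⟨hxi, hxC⟩, hxk⟩)
    · exact mem_union_left _ (mem_biUnion.2 ⟨i, mem_Icc.2 ⟨Nat.zero_le i, by omega⟩, hxi⟩)
  have hlost : U ∩ S ⊆ S ∩ L k := fun x hx =>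
    mem_inter.2 ⟨(mem_inter.1 hx).2, hL.inter_biUnion_subset hk <|
      mem_inter.2 ⟨(mem_sdiff.1 (hSA (mem_inter.1 hx).2)).1, (mem_inter.1 hx).1⟩⟩
  have hsum := sum_Icc_succ_top (Nat.zero_le (k + 1)) w
  have hU := card_sdiff_add_card_inter U S
  have := (card_le_card hsplit).trans (card_union_le U (A \ L k))
  have := card_le_card hlost
  omega

theorem IsColoringFrom.le_card_sdiff (hgood : ∀ i, 1 ≤ i → i ≤ n - 1 → w i + w (i + 1) ≤ #(L i))
    (hn : w n ≤ #(L n)) {k : ℕ} (hk : k + 1 ≤ n) {c : ℕ → Finset ℕ}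
    (hc : IsColoringFrom L w n (k + 2) c) (hcn : c (n + 1) = ∅) :
    w (k + 1) ≤ #(L (k + 1) \ c (k + 2)) := by
  rcases eq_or_lt_of_le hk with rfl | hlt
  · simpa [hcn] using hn
  · have := Finset.le_card_sdiff (c (k + 2)) (L (k + 1))
    have := (hc.1 (k + 2) le_rfl hlt).2
    have : w (k + 1) + w (k + 2) ≤ #(L (k + 1)) := hgood (k + 1) (by omega) (by omega)
    omega

theorem IsWaterfall.exists_isColoringFrom (hL : IsWaterfall n L)
    (hgood : ∀ i, 1 ≤ i → i ≤ n - 1 → w i + w (i + 1) ≤ #(L i)) (hn : w n ≤ #(L n))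
    (hamp : ∀ j, j ≤ n → ∑ k ∈ Icc 0 j, w k ≤ #((Icc 0 j).biUnion L)) {k : ℕ} (hk : k ≤ n) :
    ∃ c, IsColoringFrom L w n (k + 1) c ∧ c (n + 1) = ∅ ∧
      ∑ i ∈ Icc 0 k, w i ≤ #((Icc 0 k).biUnion L \ c (k + 1)) := by
  induction hk using Nat.decreasingInduction with
  | self =>
    exact ⟨fun _ => ∅, ⟨fun i hi hin => by omega, fun i hi hin => by omega⟩, rfl,
      by simpa using hamp n le_rfl⟩
  | of_succ k hk ih =>
    obtain ⟨c, hc, hcn, hC⟩ := ih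
    obtain ⟨S, hS, hSw, hinv⟩ := hL.exists_subset_card_eq_sum_le_card_sdiff hk
      (hc.le_card_sdiff hgood hn hk hcn) (hamp k (by omega)) hC
    refine ⟨update c (k + 1) S, hc.update hk hS hSw, ?_, by simpa using hinv⟩
    rwa [update_of_ne (by omega)]

end

/-- Corollary: for a good waterfall list with `|L n| ≥ w n`, colorability is equivalent
to the amplitude condition on initial segments only. -/
theorem good_waterfall_path_colorable_iff (n : ℕ) (L : ℕ → Finset ℕ) (w : ℕ → ℕ)
    (hwf : ∀ i j, i ≤ n → j ≤ n → i + 2 ≤ j → Disjoint (L i) (L j))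
    (hgood : ∀ i, 1 ≤ i → i ≤ n - 1 → w i + w (i + 1) ≤ (L i).card)
    (hn : w n ≤ (L n).card) :
    (∃ c : ℕ → Finset ℕ, (∀ i, i ≤ n → c i ⊆ L i ∧ (c i).card = w i) ∧
        ∀ i, i < n → Disjoint (c i) (c (i + 1))) ↔
      (∀ j, j ≤ n →
        ∑ k ∈ Finset.Icc 0 j, w k ≤ ((Finset.Icc 0 j).biUnion L).card) := by
  have hL : IsWaterfall n L := hwf
  constructor
  · rintro ⟨c, hcL, hcd⟩ j hj
    exact hL.sum_le_card_biUnion ⟨fun i _ hi => hcL i hi, fun i _ hi => hcd i hi⟩ hj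
  · intro hamp
    obtain ⟨c, hc, -, h0⟩ := hL.exists_isColoringFrom hgood hn hamp (Nat.zero_le n)
    obtain ⟨S, hS, hSw⟩ := exists_subset_card_eq (s := L 0 \ c 1) (by simpa using h0)
    obtain ⟨hcL, hcd⟩ := hc.update (Nat.zero_le n) hS hSw
    exact ⟨_, fun i hi => hcL i (Nat.zero_le i) hi, fun i hi => hcd i (Nat.zero_le i) hi⟩
end

section
/- Hall's condition is sufficient for paths: let P be the path on vertices 0,...,n with list assignment L and weight w. If for all 0 ≤ i ≤ j ≤ n, Σ_{k ∈ ⋃_{t=i}^{j} L(t)} α(P_{i,j}, L, k) ≥ Σ_{t=i}^{j} w(t), where P_{i,j} is the subpath on vertices i,...,j and α(P_{i,j},L,k) is the independence number of the subgraph of P_{i,j} induced by vertices whose list contains k, then P admits an (L,w)-coloring. -/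
/-- Independence number of the subgraph of a path induced by a finite set of natural numbers,
where `u` and `v` are adjacent iff they are consecutive integers. -/
noncomputable def pathIndepNum (A : Finset ℕ) : ℕ :=
  (A.powerset.filter (fun S => ∀ u ∈ S, ∀ v ∈ S, v ≠ u + 1)).sup Finset.card

namespace PathHall

open Finset


lemma pin_ge {A S : Finset ℕ} (hS : S ⊆ A) (h : ∀ u ∈ S, ∀ v ∈ S, v ≠ u + 1) :
    S.card ≤ pathIndepNum A :=
  Finset.le_sup (Finset.mem_filter.mpr ⟨Finset.mem_powerset.mpr hS, h⟩)

lemma pin_exists (A : Finset ℕ) :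
    ∃ S, S ⊆ A ∧ (∀ u ∈ S, ∀ v ∈ S, v ≠ u + 1) ∧ pathIndepNum A = S.card := by
  obtain ⟨S, hS, hsup⟩ := Finset.exists_mem_eq_sup
    (A.powerset.filter (fun S => ∀ u ∈ S, ∀ v ∈ S, v ≠ u + 1))
    ⟨∅, by simp⟩ Finset.card
  rw [Finset.mem_filter, Finset.mem_powerset] at hS
  exact ⟨S, hS.1, hS.2, hsup⟩

lemma pin_empty : pathIndepNum (∅ : Finset ℕ) = 0 := by
  obtain ⟨S, h1, h2, h3⟩ := pin_exists ∅
  rw [h3, Finset.card_eq_zero.mpr (Finset.subset_empty.mp h1)]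

lemma pin_singleton (x : ℕ) : pathIndepNum ({x} : Finset ℕ) = 1 := by
  obtain ⟨S, h1, h2, h3⟩ := pin_exists {x}
  refine le_antisymm ?_ ?_
  · rw [h3]; exact (Finset.card_le_card h1).trans (by simp)
  · exact pin_ge (le_refl {x}) (by intro u hu v hv; simp at hu hv; omega)

lemma pin_le_pair (A : Finset ℕ) (x : ℕ) :
    pathIndepNum A ≤ 1 + pathIndepNum ((A.erase x).erase (x + 1)) := by
  obtain ⟨S, h1, h2, h3⟩ := pin_exists A
  rw [h3]
  have hsub : (S.erase x).erase (x + 1) ⊆ (A.erase x).erase (x + 1) :=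
    Finset.erase_subset_erase _ (Finset.erase_subset_erase _ h1)
  have hind : ∀ u ∈ (S.erase x).erase (x + 1), ∀ v ∈ (S.erase x).erase (x + 1), v ≠ u + 1 := by
    intro u hu v hv
    exact h2 u (Finset.mem_of_mem_erase (Finset.mem_of_mem_erase hu)) v
      (Finset.mem_of_mem_erase (Finset.mem_of_mem_erase hv))
  have hle := pin_ge hsub hind
  by_cases hx : x ∈ S
  · have hx1 : x + 1 ∉ S.erase x := by
      intro h
      exact h2 x hx (x + 1) (Finset.mem_of_mem_erase h) rfl
    rw [Finset.erase_eq_of_notMem hx1] at hle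
    have hc := Finset.card_erase_of_mem hx
    have hpos : 1 ≤ S.card := Finset.card_pos.mpr ⟨x, hx⟩
    omega
  · rw [Finset.erase_eq_of_notMem hx] at hle
    by_cases hx1 : x + 1 ∈ S
    · have hc := Finset.card_erase_of_mem hx1
      have hpos : 1 ≤ S.card := Finset.card_pos.mpr ⟨x + 1, hx1⟩
      omega
    · rw [Finset.erase_eq_of_notMem hx1] at hle
      omega

lemma pin_rec (A : Finset ℕ) (x : ℕ) (hx : x ∈ A) (hmin : ∀ y ∈ A, x ≤ y) :
    pathIndepNum A = 1 + pathIndepNum ((A.erase x).erase (x + 1)) := by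
  refine le_antisymm (pin_le_pair A x) ?_
  obtain ⟨S, h1, h2, h3⟩ := pin_exists ((A.erase x).erase (x + 1))
  have hxS : x ∉ S := by
    intro h
    exact (Finset.mem_erase.mp (Finset.mem_of_mem_erase (h1 h))).1 rfl
  have hsub : insert x S ⊆ A := by
    intro y hy
    rcases Finset.mem_insert.mp hy with h | h
    · exact h ▸ hx
    · exact Finset.mem_of_mem_erase (Finset.mem_of_mem_erase (h1 h))
  have hind : ∀ u ∈ insert x S, ∀ v ∈ insert x S, v ≠ u + 1 := by
    intro u hu v hv
    rcases Finset.mem_insert.mp hu with hu' | hu' <;> rcases Finset.mem_insert.mp hv with hv' | hv'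
    · subst hu'; subst hv'; omega
    · subst hu'
      intro hc
      exact (Finset.mem_erase.mp (h1 hv')).1 hc
    · subst hv'
      have hu2 : u ∈ A := Finset.mem_of_mem_erase (Finset.mem_of_mem_erase (h1 hu'))
      have := hmin u hu2
      omega
    · exact h2 u hu' v hv'
  have hge := pin_ge hsub hind
  rw [Finset.card_insert_of_notMem hxS] at hge
  omega

lemma pin_run (ℓ : ℕ) : ∀ (A : Finset ℕ) (a : ℕ), (∀ t, t < ℓ → a + t ∈ A) → a + ℓ ∉ A →
    (∀ y ∈ A, a ≤ y) → pathIndepNum A = ℓ % 2 + pathIndepNum (A.erase a) := by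
  induction ℓ using Nat.strong_induction_on with
  | _ ℓ ih =>
  intro A a h1 h2 h3
  rcases ℓ with _ | ℓ
  · rw [Finset.erase_eq_of_notMem (by simpa using h2)]
    simp
  rcases ℓ with _ | ℓ
  · have ha : a ∈ A := by simpa using h1 0 (by omega)
    have ha1 : a + 1 ∉ A := by simpa using h2
    rw [pin_rec A a ha h3,
      Finset.erase_eq_of_notMem (show a + 1 ∉ A.erase a from fun h => ha1 (Finset.mem_of_mem_erase h))]
  · have ha : a ∈ A := by simpa using h1 0 (by omega)
    have ha1 : a + 1 ∈ A := h1 1 (by omega)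
    have e1 := pin_rec A a ha h3
    have hmin1 : ∀ y ∈ A.erase a, a + 1 ≤ y := by
      intro y hy
      have h := h3 y (Finset.mem_of_mem_erase hy)
      have h' := (Finset.mem_erase.mp hy).1
      omega
    have ha1' : a + 1 ∈ A.erase a := Finset.mem_erase.mpr ⟨by omega, ha1⟩
    have e2 := pin_rec (A.erase a) (a + 1) ha1' hmin1
    have hxx : a + 1 + 1 = a + 2 := by omega
    rw [hxx] at e2
    have e3 : pathIndepNum ((A.erase a).erase (a + 1)) =
        ℓ % 2 + pathIndepNum (((A.erase a).erase (a + 1)).erase (a + 2)) := by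
      apply ih ℓ (by omega)
      · intro t ht
        have hmem := h1 (t + 2) (by omega)
        have heq : a + (t + 2) = a + 2 + t := by omega
        rw [heq] at hmem
        exact Finset.mem_erase.mpr ⟨by omega, Finset.mem_erase.mpr ⟨by omega, hmem⟩⟩
      · have heq : a + 2 + ℓ = a + (ℓ + 1 + 1) := by omega
        rw [heq]
        intro hc
        exact h2 (Finset.mem_of_mem_erase (Finset.mem_of_mem_erase hc))
      · intro y hy
        have h := h3 y (Finset.mem_of_mem_erase (Finset.mem_of_mem_erase hy))
        have h' := (Finset.mem_erase.mp hy).1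
        have h'' := (Finset.mem_erase.mp (Finset.mem_of_mem_erase hy)).1
        omega
    omega




lemma exists_bottom (key : ℕ → ℕ) : ∀ (n : ℕ) (S : Finset ℕ), n ≤ S.card →
    ∃ C, C ⊆ S ∧ C.card = n ∧ ∀ k ∈ C, ∀ k' ∈ S, k' ∉ C → key k ≤ key k' := by
  intro n
  induction n with
  | zero => intro S _; exact ⟨∅, by simp, by simp, by simp⟩
  | succ n ihn =>
    intro S hS
    have hne : S.Nonempty := Finset.card_pos.mp (by omega)
    obtain ⟨k0, hk0S, hk0min⟩ := Finset.exists_min_image S key hne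
    have hcard : n ≤ (S.erase k0).card := by
      rw [Finset.card_erase_of_mem hk0S]; omega
    obtain ⟨C', hC'1, hC'2, hC'3⟩ := ihn (S.erase k0) hcard
    have hk0C' : k0 ∉ C' := fun h => (Finset.mem_erase.mp (hC'1 h)).1 rfl
    refine ⟨insert k0 C', ?_, ?_, ?_⟩
    · intro x hx
      rcases Finset.mem_insert.mp hx with h | h
      · exact h ▸ hk0S
      · exact Finset.mem_of_mem_erase (hC'1 h)
    · rw [Finset.card_insert_of_notMem hk0C', hC'2]
    · intro k hk k' hk'S hk'C
      rcases Finset.mem_insert.mp hk with h | h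
      · subst h; exact hk0min k' hk'S
      · have hk'1 : k' ∈ S.erase k0 :=
          Finset.mem_erase.mpr ⟨fun hc => hk'C (hc ▸ Finset.mem_insert_self k0 C'), hk'S⟩
        exact hC'3 k h k' hk'1 (fun hc => hk'C (Finset.mem_insert_of_mem hc))

lemma crux {K K' C : Finset ℕ} {fA fB fB' : ℕ → ℕ} {W wa : ℕ}
    (hK'K : K' ⊆ K)
    (hzero : ∀ k ∈ K, k ∉ K' → fB' k = 0)
    (hCK : C ⊆ K) (hCcard : C.card = wa)
    (hall1 : wa + W ≤ ∑ k ∈ K, fA k)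
    (hall2 : W ≤ ∑ k ∈ K, fB k)
    (hC1 : ∀ k ∈ C, fA k ≤ 1 + fB' k)
    (hC2 : ∀ k, k ∉ C → fB k = fB' k)
    (hdich : (∀ k ∈ C, fA k = 1 + fB k) ∨ (∀ k, k ∉ C → fA k = fB k)) :
    W ≤ ∑ k ∈ K', fB' k := by
  have hsum : ∑ k ∈ K', fB' k = ∑ k ∈ K, fB' k := Finset.sum_subset hK'K hzero
  rw [hsum]
  rcases hdich with hd | hd
  · have hle : ∀ k ∈ K, fB k ≤ fB' k := by
      intro k hk
      by_cases hkC : k ∈ C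
      · have h1 := hC1 k hkC
        have h2 := hd k hkC
        omega
      · exact (hC2 k hkC).le
    exact hall2.trans (Finset.sum_le_sum hle)
  · have hle : ∀ k ∈ K, fA k ≤ fB' k + (if k ∈ C then 1 else 0) := by
      intro k hk
      by_cases hkC : k ∈ C
      · rw [if_pos hkC]
        have := hC1 k hkC
        omega
      · rw [if_neg hkC]
        have h1 := hd k hkC
        have h2 := hC2 k hkC
        omega
    have h1 : ∑ k ∈ K, fA k ≤ ∑ k ∈ K, fB' k + ∑ k ∈ K, (if k ∈ C then 1 else 0) := by
      rw [← Finset.sum_add_distrib]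
      exact Finset.sum_le_sum hle
    have h2 : ∑ k ∈ K, (if k ∈ C then (1 : ℕ) else 0) = wa := by
      rw [Finset.sum_ite_mem, Finset.inter_eq_right.mpr hCK]
      simp [hCcard]
    omega

lemma hall_single {L : ℕ → Finset ℕ} {w : ℕ → ℕ} {a : ℕ}
    (h : ∑ t ∈ Icc a a, w t ≤
      ∑ k ∈ (Icc a a).biUnion L, pathIndepNum ((Icc a a).filter (fun t => k ∈ L t))) :
    w a ≤ (L a).card := by
  rw [Finset.Icc_self, Finset.sum_singleton, Finset.singleton_biUnion] at h
  calc w a ≤ ∑ k ∈ L a, pathIndepNum (({a} : Finset ℕ).filter (fun t => k ∈ L t)) := h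
    _ = ∑ _k ∈ L a, 1 := Finset.sum_congr rfl (fun k hk => by
        rw [Finset.filter_singleton, if_pos hk, pin_singleton])
    _ = (L a).card := by simp

lemma aux (m : ℕ) : ∀ (a : ℕ) (L : ℕ → Finset ℕ) (w : ℕ → ℕ),
    (∀ i j, a ≤ i → i ≤ j → j ≤ a + m →
      ∑ t ∈ Finset.Icc i j, w t ≤
        ∑ k ∈ (Finset.Icc i j).biUnion L,
          pathIndepNum ((Finset.Icc i j).filter (fun t => k ∈ L t))) →
    ∃ c : ℕ → Finset ℕ, (∀ i, a ≤ i → i ≤ a + m → c i ⊆ L i ∧ (c i).card = w i) ∧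
      ∀ i, a ≤ i → i + 1 ≤ a + m → Disjoint (c i) (c (i + 1)) := by
  induction m with
  | zero =>
    intro a L w hall
    have hwa : w a ≤ (L a).card := hall_single (hall a a le_rfl le_rfl (by omega))
    obtain ⟨C, hC1, hC2⟩ := Finset.exists_subset_card_eq hwa
    refine ⟨fun i => if i = a then C else ∅, ?_, ?_⟩
    · intro i h1 h2
      have hia : i = a := by omega
      subst hia
      simp only [if_pos rfl]
      exact ⟨hC1, hC2⟩
    · intro i h1 h2
      exfalso; omega
  | succ m ih =>
    intro a L w hall
    have hwa : w a ≤ (L a).card := hall_single (hall a a le_rfl le_rfl (by omega))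
    have hex : ∀ k : ℕ, ∃ t, (k ∉ L (a + t) ∨ m + 2 ≤ t) := fun k => ⟨m + 2, Or.inr le_rfl⟩
    set r : ℕ → ℕ := fun k => Nat.find (hex k) with hr_def
    have hr_lt : ∀ k t, t < r k → k ∈ L (a + t) ∧ t < m + 2 := by
      intro k t ht
      have h := Nat.find_min (hex k) ht
      push_neg at h
      exact ⟨h.1, by omega⟩
    have hr_spec : ∀ k, k ∉ L (a + r k) ∨ m + 2 ≤ r k := fun k => Nat.find_spec (hex k)
    have hr_le : ∀ k, r k ≤ m + 2 := fun k => Nat.find_le (Or.inr le_rfl)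
    set key : ℕ → ℕ := fun k => if r k % 2 = 1 then r k else 2 * (m + 3) - r k with hkey_def
    obtain ⟨C, hCL, hCcard, hCmin⟩ := exists_bottom key (w a) (L a) hwa
    set L' : ℕ → Finset ℕ := fun t => if t = a + 1 then L (a + 1) \ C else L t with hL'def
    have hL'sub : ∀ t, L' t ⊆ L t := by
      intro t
      by_cases h : t = a + 1
      · subst h; simp [hL'def]
      · simp [hL'def, h]
    have hall'' : ∀ i j, a + 1 ≤ i → i ≤ j → j ≤ a + 1 + m →
        ∑ t ∈ Finset.Icc i j, w t ≤
          ∑ k ∈ (Finset.Icc i j).biUnion L',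
            pathIndepNum ((Finset.Icc i j).filter (fun t => k ∈ L' t)) := by
      intro i j hi hij hj
      by_cases hia : i = a + 1
      · subst hia
        -- main case
        have hAB : ∀ k : ℕ, ((Icc a j).filter (fun t => k ∈ L t)).erase a =
            (Icc (a + 1) j).filter (fun t => k ∈ L t) := by
          intro k
          ext t
          simp only [Finset.mem_erase, Finset.mem_filter, Finset.mem_Icc]
          constructor
          · rintro ⟨h1, ⟨h2, h3⟩, h4⟩
            exact ⟨⟨by omega, h3⟩, h4⟩
          · rintro ⟨⟨h2, h3⟩, h4⟩
            exact ⟨by omega, ⟨by omega, h3⟩, h4⟩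
        have hK'K : (Icc (a + 1) j).biUnion L' ⊆ (Icc a j).biUnion L := by
          intro k hk
          rw [Finset.mem_biUnion] at hk ⊢
          obtain ⟨t, ht, hkt⟩ := hk
          rw [Finset.mem_Icc] at ht
          exact ⟨t, Finset.mem_Icc.mpr ⟨by omega, ht.2⟩, hL'sub t hkt⟩
        have hzero : ∀ k ∈ (Icc a j).biUnion L, k ∉ (Icc (a + 1) j).biUnion L' →
            pathIndepNum ((Icc (a + 1) j).filter (fun t => k ∈ L' t)) = 0 := by
          intro k _ hk'
          have he : (Icc (a + 1) j).filter (fun t => k ∈ L' t) = ∅ := by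
            rw [Finset.filter_eq_empty_iff]
            intro t ht hc
            exact hk' (Finset.mem_biUnion.mpr ⟨t, ht, hc⟩)
          rw [he, pin_empty]
        have hCK : C ⊆ (Icc a j).biUnion L := by
          intro k hk
          exact Finset.mem_biUnion.mpr ⟨a, Finset.mem_Icc.mpr ⟨le_rfl, by omega⟩, hCL hk⟩
        have hsplit : insert a (Icc (a + 1) j) = Icc a j := by
          rw [Finset.Icc_add_one_left_eq_Ioc]
          exact Finset.Ioc_insert_left (by omega)
        have hsplitw : ∑ t ∈ Icc a j, w t = w a + ∑ t ∈ Icc (a + 1) j, w t := by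
          rw [← hsplit, Finset.sum_insert (by rw [Finset.mem_Icc]; omega)]
        have hall1 : w a + ∑ t ∈ Icc (a + 1) j, w t ≤
            ∑ k ∈ (Icc a j).biUnion L, pathIndepNum ((Icc a j).filter (fun t => k ∈ L t)) := by
          have h := hall a j le_rfl (by omega) (by omega)
          rw [hsplitw] at h
          exact h
        have hall2 : ∑ t ∈ Icc (a + 1) j, w t ≤
            ∑ k ∈ (Icc a j).biUnion L,
              pathIndepNum ((Icc (a + 1) j).filter (fun t => k ∈ L t)) := by
          have h := hall (a + 1) j (by omega) hij (by omega)
          have hK1K : (Icc (a + 1) j).biUnion L ⊆ (Icc a j).biUnion L :=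
            Finset.biUnion_subset_biUnion_of_subset_left L
              (Finset.Icc_subset_Icc (by omega) le_rfl)
          have hext : ∑ k ∈ (Icc (a + 1) j).biUnion L,
              pathIndepNum ((Icc (a + 1) j).filter (fun t => k ∈ L t)) =
              ∑ k ∈ (Icc a j).biUnion L,
              pathIndepNum ((Icc (a + 1) j).filter (fun t => k ∈ L t)) := by
            apply Finset.sum_subset hK1K
            intro k _ hk1
            have he : (Icc (a + 1) j).filter (fun t => k ∈ L t) = ∅ := by
              rw [Finset.filter_eq_empty_iff]
              intro t ht hc
              exact hk1 (Finset.mem_biUnion.mpr ⟨t, ht, hc⟩)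
            rw [he, pin_empty]
          exact h.trans (le_of_eq hext)
        have hC2 : ∀ k, k ∉ C →
            pathIndepNum ((Icc (a + 1) j).filter (fun t => k ∈ L t)) =
            pathIndepNum ((Icc (a + 1) j).filter (fun t => k ∈ L' t)) := by
          intro k hkC
          apply congrArg
          apply Finset.filter_congr
          intro t ht
          by_cases h : t = a + 1
          · subst h; simp [hL'def, hkC]
          · simp [hL'def, h]
        have hC1 : ∀ k ∈ C, pathIndepNum ((Icc a j).filter (fun t => k ∈ L t)) ≤
            1 + pathIndepNum ((Icc (a + 1) j).filter (fun t => k ∈ L' t)) := by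
          intro k hkC
          have h := pin_le_pair ((Icc a j).filter (fun t => k ∈ L t)) a
          have heq : (((Icc a j).filter (fun t => k ∈ L t)).erase a).erase (a + 1) =
              (Icc (a + 1) j).filter (fun t => k ∈ L' t) := by
            rw [hAB k]
            ext t
            simp only [Finset.mem_erase, Finset.mem_filter, Finset.mem_Icc]
            by_cases ht : t = a + 1
            · subst ht
              simp [hL'def, hkC]
            · simp [hL'def, ht]
          rw [heq] at h
          exact h
        have hchar : ∀ k : ℕ, pathIndepNum ((Icc a j).filter (fun t => k ∈ L t)) =
            min (r k) (j + 1 - a) % 2 +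
            pathIndepNum ((Icc (a + 1) j).filter (fun t => k ∈ L t)) := by
          intro k
          have h1 : ∀ t, t < min (r k) (j + 1 - a) →
              a + t ∈ (Icc a j).filter (fun t => k ∈ L t) := by
            intro t ht
            rw [Finset.mem_filter, Finset.mem_Icc]
            exact ⟨⟨by omega, by omega⟩, (hr_lt k t (by omega)).1⟩
          have h2 : a + min (r k) (j + 1 - a) ∉ (Icc a j).filter (fun t => k ∈ L t) := by
            rw [Finset.mem_filter, Finset.mem_Icc]
            rintro ⟨⟨_, hle⟩, hmem⟩
            rcases le_or_gt (j + 1 - a) (r k) with hc | hc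
            · omega
            · have hmin : min (r k) (j + 1 - a) = r k := by omega
              rcases hr_spec k with hs | hs
              · rw [hmin] at hmem
                exact hs hmem
              · have := hr_le k
                omega
          have h3 : ∀ y ∈ (Icc a j).filter (fun t => k ∈ L t), a ≤ y := by
            intro y hy
            exact (Finset.mem_Icc.mp (Finset.mem_filter.mp hy).1).1
          have h := pin_run (min (r k) (j + 1 - a)) _ a h1 h2 h3
          rw [h, hAB k]
        have hdich : (∀ k ∈ C, pathIndepNum ((Icc a j).filter (fun t => k ∈ L t)) =
              1 + pathIndepNum ((Icc (a + 1) j).filter (fun t => k ∈ L t))) ∨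
            (∀ k, k ∉ C → pathIndepNum ((Icc a j).filter (fun t => k ∈ L t)) =
              pathIndepNum ((Icc (a + 1) j).filter (fun t => k ∈ L t))) := by
          by_cases hodd : ∀ k ∈ C, min (r k) (j + 1 - a) % 2 = 1
          · left
            intro k hk
            rw [hchar k, hodd k hk]
          · right
            push_neg at hodd
            obtain ⟨k0, hk0C, hk0⟩ := hodd
            intro k hkC
            have hz : min (r k) (j + 1 - a) % 2 = 0 := by
              by_cases hkL : k ∈ L a
              · by_contra hne
                have h1 : min (r k) (j + 1 - a) % 2 = 1 := by omega
                have hkey := hCmin k0 hk0C k hkL hkC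
                have hr1 := hr_le k
                have hr0 := hr_le k0
                simp only [hkey_def] at hkey
                split_ifs at hkey <;> omega
              · have hrk0 : r k = 0 := by
                  rw [hr_def]
                  exact (Nat.find_eq_zero (hex k)).mpr (Or.inl (by simpa using hkL))
                omega
            rw [hchar k, hz, Nat.zero_add]
        exact crux hK'K hzero hCK hCcard hall1 hall2 hC1 hC2 hdich
      · have hLL' : ∀ t ∈ Icc i j, L' t = L t := by
          intro t ht
          rw [Finset.mem_Icc] at ht
          have : t ≠ a + 1 := by omega
          simp [hL'def, this]
        have hb : (Icc i j).biUnion L' = (Icc i j).biUnion L :=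
          Finset.biUnion_congr rfl hLL'
        rw [hb]
        calc ∑ t ∈ Icc i j, w t
            ≤ ∑ k ∈ (Icc i j).biUnion L, pathIndepNum ((Icc i j).filter (fun t => k ∈ L t)) :=
            hall i j (by omega) hij (by omega)
          _ = ∑ k ∈ (Icc i j).biUnion L,
              pathIndepNum ((Icc i j).filter (fun t => k ∈ L' t)) :=
            Finset.sum_congr rfl (fun k _ => by
              apply congrArg
              apply Finset.filter_congr
              intro t ht
              rw [hLL' t ht])
    obtain ⟨c', hc'1, hc'2⟩ := ih (a + 1) L' w hall''
    refine ⟨fun i => if i = a then C else c' i, ?_, ?_⟩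
    · intro i h1 h2
      by_cases hia : i = a
      · subst hia
        simp only [if_pos rfl]
        exact ⟨hCL, hCcard⟩
      · have h3 := hc'1 i (by omega) (by omega)
        simp only [if_neg hia]
        exact ⟨h3.1.trans (hL'sub i), h3.2⟩
    · intro i h1 h2
      by_cases hia : i = a
      · subst hia
        have hsub := (hc'1 (i + 1) (by omega) (by omega)).1
        simp only [if_pos rfl, if_neg (show i + 1 ≠ i by omega)]
        have hL'a1 : L' (i + 1) = L (i + 1) \ C := by simp [hL'def]
        rw [hL'a1] at hsub
        exact Finset.disjoint_left.mpr (fun x hx hx' => (Finset.mem_sdiff.mp (hsub hx')).2 hx)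
      · have h := hc'2 i (by omega) (by omega)
        simp only [if_neg hia, if_neg (show i + 1 ≠ a by omega)]
        exact h


end PathHall

/-- Hall's condition is sufficient for paths. -/
theorem hall_condition_sufficient_path (n : ℕ) (L : ℕ → Finset ℕ) (w : ℕ → ℕ)
    (hall : ∀ i j, i ≤ j → j ≤ n →
      ∑ t ∈ Finset.Icc i j, w t ≤
        ∑ k ∈ (Finset.Icc i j).biUnion L,
          pathIndepNum ((Finset.Icc i j).filter (fun t => k ∈ L t))) :
    ∃ c : ℕ → Finset ℕ, (∀ i, i ≤ n → c i ⊆ L i ∧ (c i).card = w i) ∧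
      ∀ i, i < n → Disjoint (c i) (c (i + 1)) := by

  obtain ⟨c, hc1, hc2⟩ := PathHall.aux n 0 L w (by
    intro i j _ hij hj
    exact hall i j hij (by omega))
  exact ⟨c, fun i hi => hc1 i (by omega) (by omega), fun i hi => hc2 i (by omega) (by omega)⟩
end

section
/- Let b ≥ 1, e ≥ 1, a = 2b + e, and let L be a list assignment on the path 0,...,n with |L(0)| = |L(n)| = b and |L(i)| = a for all 1 ≤ i ≤ n−1. If n is at least the smallest even integer ≥ 2b/e, then the path admits an (L,b)-coloring, i.e., one can choose c(i) ⊆ L(i) with |c(i)| = b and c(i) ∩ c(i+1) = ∅ for all i. -/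
/-- From a ground set `A` with at least `b` elements, at least `b - k` of which
avoid `U`, one can pick a `b`-subset meeting `U` in at most `k` elements. -/
lemma ext_choice (U A : Finset ℕ) (b k : ℕ) (hA : b ≤ A.card)
    (hP : b - k ≤ (A \ U).card) :
    ∃ s, s ⊆ A ∧ s.card = b ∧ (s ∩ U).card ≤ k := by
  obtain ⟨B, hBsub, hBcard⟩ := Finset.exists_subset_card_eq hP
  have hBA : B ⊆ A := hBsub.trans Finset.sdiff_subset
  obtain ⟨s, hBs, hsA, hscard⟩ :=
    Finset.exists_subsuperset_card_eq hBA (by omega) hA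
  refine ⟨s, hsA, hscard, ?_⟩
  have h1 : s ∩ U ⊆ s \ B := by
    intro x hx
    simp only [Finset.mem_inter] at hx
    simp only [Finset.mem_sdiff]
    exact ⟨hx.1, fun hxB => (Finset.mem_sdiff.mp (hBsub hxB)).2 hx.2⟩
  calc (s ∩ U).card ≤ (s \ B).card := Finset.card_le_card h1
    _ = s.card - B.card := Finset.card_sdiff_of_subset hBs
    _ ≤ k := by omega

/-- If `|L 0| = |L n| = b`, `|L i| = a = 2b + e` for interior vertices and
`n ≥ Even(2b/e)` (the smallest even integer at least `2b/e`, i.e. `2⌈b/e⌉`),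
then the path is `(L,b)`-colorable. -/
theorem path_Lb_colorable (n a b e : ℕ) (hb : 1 ≤ b) (he : 1 ≤ e) (ha : a = 2 * b + e)
    (L : ℕ → Finset ℕ)
    (h0 : (L 0).card = b) (hLn : (L n).card = b)
    (hmid : ∀ i, 1 ≤ i → i ≤ n - 1 → (L i).card = a)
    (hn : 2 * ⌈(b : ℚ) / (e : ℚ)⌉₊ ≤ n) :
    ∃ c : ℕ → Finset ℕ, (∀ i, i ≤ n → c i ⊆ L i ∧ (c i).card = b) ∧
      ∀ i, i < n → Disjoint (c i) (c (i + 1)) := by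
  -- basic numerics
  have hm1 : 1 ≤ ⌈(b : ℚ) / (e : ℚ)⌉₊ := by
    have : (0:ℚ) < (b:ℚ)/(e:ℚ) := by positivity
    exact Nat.one_le_iff_ne_zero.mpr (by
      intro h
      rw [Nat.ceil_eq_zero] at h
      linarith)
  have hn2 : 2 ≤ n := le_trans (by omega) hn
  have hbm : b ≤ e * ⌈(b : ℚ) / (e : ℚ)⌉₊ := by
    have h1 : (b:ℚ)/(e:ℚ) ≤ (⌈(b : ℚ) / (e : ℚ)⌉₊ : ℚ) := Nat.le_ceil _
    have he' : (0:ℚ) < (e:ℚ) := by positivity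
    rw [div_le_iff₀ he'] at h1
    have : (b:ℚ) ≤ ((e * ⌈(b : ℚ) / (e : ℚ)⌉₊ : ℕ) : ℚ) := by push_cast; linarith
    exact_mod_cast this
  -- the main inductive construction
  have main : ∀ j, j ≤ n - 1 → ∀ U : Finset ℕ, ∀ k : ℕ,
      U.card ≤ b + k → b ≤ k + e * ((j+1)/2) → U.card ≤ k + e * ((j+2)/2) →
      ∃ c : ℕ → Finset ℕ, (∀ i, i ≤ j → c i ⊆ L i ∧ (c i).card = b) ∧
        (∀ i, i < j → Disjoint (c i) (c (i+1))) ∧ (c j ∩ U).card ≤ k := by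
    intro j
    induction j with
    | zero =>
      intro _ U k h1 h2 h3
      have hk : b ≤ k := by simpa using h2
      refine ⟨fun _ => L 0, ?_, ?_, ?_⟩
      · intro i hi
        interval_cases i
        exact ⟨Finset.Subset.refl _, h0⟩
      · intro i hi; omega
      · calc (L 0 ∩ U).card ≤ (L 0).card := Finset.card_le_card Finset.inter_subset_left
          _ = b := h0
          _ ≤ k := hk
    | succ j ih =>
      intro hJ U k h1 h2 h3
      have hLJ : (L (j+1)).card = 2*b + e := by
        have := hmid (j+1) (by omega) hJ; omega
      set u := (L (j+1) ∩ U).card with hu_def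
      have huU : u ≤ U.card := Finset.card_le_card Finset.inter_subset_right
      have hU'c : (L (j+1) \ U).card + u = 2*b + e := by
        rw [hu_def, Finset.card_sdiff_add_card_inter, hLJ]
      -- ceiling identities
      have hid3 : (j + 1 + 2)/2 = (j+1)/2 + 1 := by omega
      have h3' : U.card ≤ k + e * ((j+1)/2) + e := by
        rw [hid3, Nat.mul_add, Nat.mul_one] at h3; omega
      have h2' : b ≤ k + e * ((j+1+1)/2) := h2
      -- apply the inductive hypothesis with U' = L (j+1) \ U, k' = b + e + k - u
      have hg1 : (L (j+1) \ U).card ≤ b + (b + e + k - u) := by omega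
      have hg2 : b ≤ (b + e + k - u) + e * ((j+1)/2) := by
        have : u ≤ k + e * ((j+1)/2) + e := le_trans huU h3'
        omega
      have hg3 : (L (j+1) \ U).card ≤ (b + e + k - u) + e * ((j+2)/2) := by
        have h2'' : b ≤ k + e * ((j+2)/2) := h2'
        have : u ≤ b + k := le_trans huU h1
        omega
      obtain ⟨c', H1, H2, H3⟩ := ih (by omega) (L (j+1) \ U) (b + e + k - u) hg1 hg2 hg3
      have hc'j : (c' j).card = b := (H1 j le_rfl).2
      have hAint : (L (j+1) ∩ c' j).card ≤ b := by
        calc (L (j+1) ∩ c' j).card ≤ (c' j).card :=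
              Finset.card_le_card Finset.inter_subset_right
          _ = b := hc'j
      have hA2 : (L (j+1) \ c' j).card + (L (j+1) ∩ c' j).card = 2*b + e := by
        rw [Finset.card_sdiff_add_card_inter, hLJ]
      have hswap : (L (j+1) \ c' j) \ U = (L (j+1) \ U) \ c' j := by
        ext x; simp only [Finset.mem_sdiff]; tauto
      have hPU : ((L (j+1) \ U) \ c' j).card + ((L (j+1) \ U) ∩ c' j).card
          = (L (j+1) \ U).card := Finset.card_sdiff_add_card_inter _ _
      have hPc : ((L (j+1) \ U) ∩ c' j).card ≤ b + e + k - u := by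
        rw [Finset.inter_comm]; exact H3
      have huk : u ≤ b + k := le_trans huU h1
      have hPbig : b - k ≤ ((L (j+1) \ c' j) \ U).card := by
        rw [hswap]; omega
      obtain ⟨s, hsA, hscard, hsU⟩ := ext_choice U (L (j+1) \ c' j) b k (by omega) hPbig
      refine ⟨fun i => if i = j + 1 then s else c' i, ?_, ?_, ?_⟩
      · intro i hi
        by_cases hij : i = j + 1
        · subst hij
          simp only [if_pos rfl]
          exact ⟨hsA.trans Finset.sdiff_subset, hscard⟩
        · simp only [if_neg hij]; exact H1 i (by omega)
      · intro i hi
        by_cases hij : i + 1 = j + 1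
        · have hij' : i = j := by omega
          subst hij'
          simp only [if_neg (by omega : ¬ i = i + 1), if_pos rfl]
          refine Finset.disjoint_left.mpr fun x hx hxs => ?_
          exact (Finset.mem_sdiff.mp (hsA hxs)).2 hx
        · simp only [if_neg (by omega : ¬ i = j + 1), if_neg hij]
          exact H2 i (by omega)
      · simp only [if_pos rfl]; exact hsU
  -- apply with j = n - 1, U = L n, k = 0
  have hg2 : b ≤ 0 + e * ((n - 1 + 1)/2) := by
    have h1 : n - 1 + 1 = n := by omega
    rw [h1]
    have h2 : ⌈(b : ℚ) / (e : ℚ)⌉₊ ≤ n / 2 := by omega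
    calc b ≤ e * ⌈(b : ℚ) / (e : ℚ)⌉₊ := hbm
      _ ≤ e * (n / 2) := Nat.mul_le_mul_left e h2
      _ = 0 + e * (n / 2) := by omega
  have hg3 : (L n).card ≤ 0 + e * ((n - 1 + 2)/2) := by
    have h1 : n / 2 ≤ (n - 1 + 2)/2 := by omega
    calc (L n).card = b := hLn
      _ ≤ 0 + e * ((n - 1 + 1)/2) := hg2
      _ ≤ 0 + e * ((n - 1 + 2)/2) := by
          have : (n - 1 + 1)/2 ≤ (n - 1 + 2)/2 := by omega
          exact Nat.add_le_add_left (Nat.mul_le_mul_left e this) 0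
  obtain ⟨c, Hp, Hd, HU⟩ := main (n - 1) le_rfl (L n) 0 (by rw [hLn]; omega) hg2 hg3
  refine ⟨fun i => if i = n then L n else c i, ?_, ?_⟩
  · intro i hi
    by_cases h : i = n
    · subst h; simp only [if_pos rfl]
      exact ⟨Finset.Subset.refl _, hLn⟩
    · simp only [if_neg h]; exact Hp i (by omega)
  · intro i hi
    by_cases h : i + 1 = n
    · have hi' : i = n - 1 := by omega
      simp only [if_neg (by omega : ¬ i = n), if_pos h]
      have hinter : c i ∩ L n = ∅ := by
        apply Finset.card_eq_zero.mp
        have : (c (n-1) ∩ L n).card ≤ 0 := HU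
        rw [hi']; omega
      exact Finset.disjoint_iff_inter_eq_empty.mpr hinter
    · simp only [if_neg (by omega : ¬ i = n), if_neg h]
      exact Hd i (by omega)
end

section
/- Let n ≥ 3 and let a, b be positive integers with a/b ≥ 2 + 1/⌊n/2⌋. Then the cycle C_n is (a,b)-free-choosable: for every vertex v_0 of C_n, every list assignment L with |L(v)| = a for v ≠ v_0 and |L(v_0)| = b, there exists an (L,b)-coloring of C_n. -/
namespace CycleFreeAux

open Finset

/-- Backward requirement sets along the path `v_1, …, v_{n-1}` (distance `d` from the end). -/
def PP (L : ℕ → Finset ℕ) (n : ℕ) : ℕ → Finset ℕ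
  | 0 => L (n-1) \ L 0
  | d+1 => L (n-2-d) \ PP L n d

/-- Backward thresholds. -/
def tt (L : ℕ → Finset ℕ) (n b : ℕ) : ℕ → ℤ
  | 0 => (b : ℤ)
  | d+1 => tt L n b d + b - ((PP L n d).card : ℤ)

lemma PP_subset (L : ℕ → Finset ℕ) (n : ℕ) : ∀ d, PP L n d ⊆ L (n-1-d)
  | 0 => sdiff_subset
  | d+1 => by
      rw [show n-1-(d+1) = n-2-d from by omega]
      exact sdiff_subset

section Core

variable {n a b : ℕ} {L : ℕ → Finset ℕ}
variable (hn : 3 ≤ n) (hb : 0 < b) (hq : 2*b+1 ≤ a)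
variable (h0 : (L 0).card = b) (hL : ∀ v, v < n → v ≠ 0 → (L v).card = a)

include hn hL in
lemma pair_card (d : ℕ) (hd : d ≤ n - 3) :
    a ≤ (PP L n (d+1)).card + (PP L n d).card := by
  have h1 : L (n-2-d) ⊆ PP L n (d+1) ∪ PP L n d := by
    intro x hx
    by_cases h : x ∈ PP L n d
    · exact mem_union_right _ h
    · exact mem_union_left _ (by simp [PP, hx, h])
  have h2 := card_le_card h1
  have h3 := card_union_le (PP L n (d+1)) (PP L n d)
  have h4 : (L (n-2-d)).card = a := hL _ (by omega) (by omega)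
  omega

include hn hL in
lemma tt_two_step (d : ℕ) (hd : d ≤ n - 3) :
    tt L n b (d+2) ≤ tt L n b d + 2*(b:ℤ) - a := by
  have h := pair_card hn hL (a := a) d hd
  have e1 : tt L n b (d+1) = tt L n b d + b - ((PP L n d).card : ℤ) := rfl
  have e2 : tt L n b (d+2) = tt L n b (d+1) + b - ((PP L n (d+1)).card : ℤ) := rfl
  have : (a : ℤ) ≤ ((PP L n (d+1)).card : ℤ) + ((PP L n d).card : ℤ) := by exact_mod_cast h
  linarith

include hn hq h0 hL in
lemma tt_le : ∀ d, 1 ≤ d → d ≤ n-2 →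
    tt L n b d ≤ (b : ℤ) - ((a : ℤ) - 2*b) * (((d+1)/2 : ℕ) : ℤ) := by
  intro d
  induction d using Nat.strong_induction_on with
  | _ d ih =>
    intro hd1 hd2
    match d, hd1 with
    | 1, _ =>
      have hc : (L (n-1)).card = a := hL _ (by omega) (by omega)
      have hs : (L (n-1)).card - (L 0).card ≤ (PP L n 0).card := le_card_sdiff _ _
      have hs' : a - b ≤ (PP L n 0).card := by omega
      have e : tt L n b 1 = (b:ℤ) + b - ((PP L n 0).card : ℤ) := rfl
      have : ((a:ℤ) - b) ≤ ((PP L n 0).card : ℤ) := by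
        have hba : b ≤ a := by omega
        have := (Nat.cast_le (α := ℤ)).mpr hs'
        push_cast [hba] at this
        linarith
      rw [e, show ((1+1)/2 : ℕ) = 1 from rfl]
      push_cast
      linarith
    | 2, _ =>
      have h := tt_two_step hn hL (b := b) 0 (by omega)
      have e : tt L n b 0 = (b:ℤ) := rfl
      rw [show ((2+1)/2 : ℕ) = 1 from rfl]
      push_cast
      rw [e] at h
      linarith
    | (e+3), _ =>
      have h := tt_two_step hn hL (b := b) (e+1) (by omega)
      have ihh := ih (e+1) (by omega) (by omega) (by omega)
      have hcast : (((e+3+1)/2 : ℕ) : ℤ) = (((e+1+1)/2 : ℕ) : ℤ) + 1 := by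
        have : (e+3+1)/2 = (e+1+1)/2 + 1 := by omega
        rw [this]; push_cast; ring
      rw [hcast]
      have hq' : (0:ℤ) ≤ (a:ℤ) - 2*b := by
        have : (2*b+1 : ℤ) ≤ a := by exact_mod_cast hq
        linarith
      calc tt L n b (e+1+2) ≤ tt L n b (e+1) + 2*(b:ℤ) - a := h
        _ ≤ ((b : ℤ) - ((a : ℤ) - 2*b) * (((e+1+1)/2 : ℕ) : ℤ)) + 2*(b:ℤ) - a := by linarith
        _ ≤ (b : ℤ) - ((a : ℤ) - 2*b) * ((((e+1+1)/2 : ℕ) : ℤ) + 1) := by ring_nf; linarith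

include hn hq h0 hL in
lemma tt_le_b (d : ℕ) (hd : d ≤ n-2) : tt L n b d ≤ (b : ℤ) := by
  rcases Nat.eq_zero_or_pos d with h | h
  · subst h; exact le_refl _
  · have := tt_le hn hq h0 hL d h hd
    have hq' : (0:ℤ) ≤ (a:ℤ) - 2*b := by
      have : (2*b+1 : ℤ) ≤ a := by exact_mod_cast hq
      linarith
    have hpos : (0:ℤ) ≤ (((d+1)/2 : ℕ) : ℤ) := Int.natCast_nonneg _
    nlinarith

include hn hq h0 hL in
lemma step {i : ℕ} (hi1 : 2 ≤ i) (hi2 : i ≤ n-1)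
    {cp : Finset ℕ} (hcpL : cp ⊆ L (i-1)) (hcpc : cp.card = b)
    (hcpt : tt L n b (n-i) ≤ ((cp ∩ PP L n (n-i)).card : ℤ)) :
    ∃ c : Finset ℕ, c ⊆ L i \ cp ∧ c.card = b ∧
      tt L n b (n-1-i) ≤ ((c ∩ PP L n (n-1-i)).card : ℤ) := by
  have hd1 : n - i = (n-1-i) + 1 := by omega
  have hPd1 : PP L n (n-i) = L (i-1) \ PP L n (n-1-i) := by
    rw [hd1, PP, show n-2-(n-1-i) = i-1 from by omega]
  -- the two intersections are disjoint subsets of cp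
  have hdisj : Disjoint (cp ∩ PP L n (n-i)) (cp ∩ PP L n (n-1-i)) := by
    rw [hPd1]
    exact Finset.disjoint_left.mpr fun x hx1 hx2 =>
      (mem_sdiff.mp (mem_inter.mp hx1).2).2 (mem_inter.mp hx2).2
  have hsum : (cp ∩ PP L n (n-i)).card + (cp ∩ PP L n (n-1-i)).card ≤ b := by
    have hsub : (cp ∩ PP L n (n-i)) ∪ (cp ∩ PP L n (n-1-i)) ⊆ cp :=
      union_subset inter_subset_left inter_subset_left
    have := card_le_card hsub
    rw [card_union_of_disjoint hdisj] at this
    omega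
  have hkey : tt L n b (n-1-i) ≤ ((PP L n (n-1-i) \ cp).card : ℤ) := by
    have e2 : tt L n b (n-i) =
        tt L n b (n-1-i) + b - ((PP L n (n-1-i)).card : ℤ) := by rw [hd1]; rfl
    have e3 : (PP L n (n-1-i) \ cp).card + (PP L n (n-1-i) ∩ cp).card
        = (PP L n (n-1-i)).card := card_sdiff_add_card_inter _ _
    have e4 : (PP L n (n-1-i) ∩ cp).card = (cp ∩ PP L n (n-1-i)).card := by
      rw [inter_comm]
    have h5 : ((cp ∩ PP L n (n-i)).card : ℤ) ≤ (b:ℤ) - ((cp ∩ PP L n (n-1-i)).card : ℤ) := by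
      have := hsum; push_cast; omega
    have e3' : ((PP L n (n-1-i) \ cp).card : ℤ) + ((cp ∩ PP L n (n-1-i)).card : ℤ)
        = ((PP L n (n-1-i)).card : ℤ) := by rw [← e4]; exact_mod_cast e3
    linarith [hcpt, e2 ▸ hcpt]
  set m := (tt L n b (n-1-i)).toNat with hm
  have hm1 : m ≤ (PP L n (n-1-i) \ cp).card := Int.toNat_le.mpr hkey
  have hmb : m ≤ b :=
    Int.toNat_le.mpr (tt_le_b hn hq h0 hL (n-1-i) (by omega))
  obtain ⟨u, hu, huc⟩ := exists_subset_card_eq hm1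
  have hPL : PP L n (n-1-i) ⊆ L i := by
    have := PP_subset L n (n-1-i)
    rwa [show n-1-(n-1-i) = i from by omega] at this
  have huB : u ⊆ L i \ cp := by
    intro x hx
    have hx' := hu hx
    rw [mem_sdiff] at hx' ⊢
    exact ⟨hPL hx'.1, hx'.2⟩
  have hB : b ≤ (L i \ cp).card := by
    have h1 : (L i).card - cp.card ≤ (L i \ cp).card := le_card_sdiff _ _
    have h2 : (L i).card = a := hL _ (by omega) (by omega)
    omega
  obtain ⟨c, hc1, hc2, hc3⟩ := exists_subsuperset_card_eq huB (huc ▸ hmb) hB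
  refine ⟨c, hc2, hc3, ?_⟩
  have hsub : u ⊆ c ∩ PP L n (n-1-i) :=
    subset_inter hc1 ((subset_sdiff.mp hu).1 |>.trans (Subset.refl _) |>.trans (Subset.refl _))
  calc tt L n b (n-1-i) ≤ (m : ℤ) := Int.self_le_toNat _
    _ ≤ ((c ∩ PP L n (n-1-i)).card : ℤ) := by
        have := card_le_card hsub
        omega

include hn hq h0 hL in
lemma base (hk : b ≤ n/2 * (a - 2*b)) :
    ∃ c : Finset ℕ, c ⊆ L 1 \ L 0 ∧ c.card = b ∧
      tt L n b (n-2) ≤ ((c ∩ PP L n (n-2)).card : ℤ) := by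
  have hd1 : n - 2 = (n-3) + 1 := by omega
  have hPd : PP L n (n-2) = L 1 \ PP L n (n-3) := by
    rw [hd1, PP, show n-2-(n-3) = 1 from by omega]
  have hq' : (2*b+1 : ℤ) ≤ a := by exact_mod_cast hq
  -- t_{n-3} ≤ a - 2b
  have ht3 : tt L n b (n-3) ≤ (a:ℤ) - 2*b := by
    rcases Nat.lt_or_ge n 4 with h4 | h4
    · have hn3 : n = 3 := by omega
      subst hn3
      have : tt L 3 b 0 = (b:ℤ) := rfl
      rw [show (3:ℕ)-3 = 0 from rfl, this]
      have hk' : b ≤ 1 * (a - 2*b) := hk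
      have : (b:ℤ) ≤ (a:ℤ) - 2*b := by
        have h2 : 2*b ≤ a := by omega
        have : b ≤ a - 2*b := by omega
        omega
      exact this
    · have h := tt_le hn hq h0 hL (n-3) (by omega) (by omega)
      obtain ⟨K, hK⟩ : ∃ K, n/2 = K := ⟨_, rfl⟩
      have hK1 : 1 ≤ K := by omega
      have hcast : ((n-3+1)/2 : ℕ) = K - 1 := by omega
      rw [hcast] at h
      have hk2 : 2*b ≤ a := by omega
      have hkZ : (b:ℤ) ≤ (K : ℤ) * ((a:ℤ) - 2*b) := by
        rw [hK] at hk
        have := (Nat.cast_le (α := ℤ)).mpr hk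
        push_cast [hk2] at this
        linarith
      have hnk : ((K - 1 : ℕ) : ℤ) = (K : ℤ) - 1 := by
        push_cast [hK1]
        ring
      rw [hnk] at h
      nlinarith
  have hkey : tt L n b (n-2) ≤ ((PP L n (n-2) \ L 0).card : ℤ) := by
    have e2 : tt L n b (n-2) = tt L n b (n-3) + b - ((PP L n (n-3)).card : ℤ) := by
      rw [hd1]; rfl
    have h1 : (L 1).card - (PP L n (n-3)).card ≤ (PP L n (n-2)).card := by
      rw [hPd]; exact le_card_sdiff _ _
    have h2 : (L 1).card = a := hL _ (by omega) (by omega)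
    have h3 : (PP L n (n-2)).card - (L 0).card ≤ (PP L n (n-2) \ L 0).card :=
      le_card_sdiff _ _
    have h1' : ((a:ℤ)) - ((PP L n (n-3)).card : ℤ) ≤ ((PP L n (n-2)).card : ℤ) := by
      have hle : (PP L n (n-3)).card ≤ a ∨ a ≤ (PP L n (n-3)).card := le_total _ _
      rcases hle with hle | hle
      · have : a - (PP L n (n-3)).card ≤ (PP L n (n-2)).card := by omega
        have := (Nat.cast_le (α := ℤ)).mpr this
        push_cast [hle] at this
        linarith
      · have : ((a:ℤ)) ≤ ((PP L n (n-3)).card : ℤ) := by exact_mod_cast hle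
        have hnn : (0:ℤ) ≤ ((PP L n (n-2)).card : ℤ) := Int.natCast_nonneg _
        linarith
    have h3' : ((PP L n (n-2)).card : ℤ) - b ≤ ((PP L n (n-2) \ L 0).card : ℤ) := by
      have hb2 : (PP L n (n-2)).card ≤ b ∨ b ≤ (PP L n (n-2)).card := le_total _ _
      rcases hb2 with hle | hle
      · have hnn : (0:ℤ) ≤ ((PP L n (n-2) \ L 0).card : ℤ) := Int.natCast_nonneg _
        have : ((PP L n (n-2)).card : ℤ) ≤ b := by exact_mod_cast hle
        linarith
      · rw [h0] at h3
        have : (PP L n (n-2)).card - b ≤ (PP L n (n-2) \ L 0).card := h3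
        have := (Nat.cast_le (α := ℤ)).mpr this
        push_cast [hle] at this
        linarith
    rw [e2]
    linarith
  set m := (tt L n b (n-2)).toNat with hm
  have hm1 : m ≤ (PP L n (n-2) \ L 0).card := Int.toNat_le.mpr hkey
  have hmb : m ≤ b := Int.toNat_le.mpr (tt_le_b hn hq h0 hL (n-2) (by omega))
  obtain ⟨u, hu, huc⟩ := exists_subset_card_eq hm1
  have hPL : PP L n (n-2) ⊆ L 1 := by rw [hPd]; exact sdiff_subset
  have huB : u ⊆ L 1 \ L 0 := by
    intro x hx
    have hx' := hu hx
    rw [mem_sdiff] at hx' ⊢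
    exact ⟨hPL hx'.1, hx'.2⟩
  have hB : b ≤ (L 1 \ L 0).card := by
    have h1 : (L 1).card - (L 0).card ≤ (L 1 \ L 0).card := le_card_sdiff _ _
    have h2 : (L 1).card = a := hL _ (by omega) (by omega)
    omega
  obtain ⟨c, hc1, hc2, hc3⟩ := exists_subsuperset_card_eq huB (huc ▸ hmb) hB
  refine ⟨c, hc2, hc3, ?_⟩
  have hsub : u ⊆ c ∩ PP L n (n-2) :=
    subset_inter hc1 ((subset_sdiff.mp hu).1)
  calc tt L n b (n-2) ≤ (m : ℤ) := Int.self_le_toNat _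
    _ ≤ ((c ∩ PP L n (n-2)).card : ℤ) := by
        have := card_le_card hsub
        omega

include hn hb hq h0 hL in
lemma chain (hk : b ≤ n/2 * (a - 2*b)) :
    ∀ m, 1 ≤ m → m ≤ n-1 → ∃ c : ℕ → Finset ℕ, c 0 = L 0 ∧
      ∀ i, 1 ≤ i → i ≤ m → (c i ⊆ L i ∧ (c i).card = b ∧ Disjoint (c i) (c (i-1)) ∧
        tt L n b (n-1-i) ≤ ((c i ∩ PP L n (n-1-i)).card : ℤ)) := by
  intro m
  induction m with
  | zero => intro h; omega
  | succ m ih =>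
    intro h1 h2
    rcases Nat.eq_zero_or_pos m with hm0 | hm0
    · subst hm0
      obtain ⟨c1, hc1, hc1c, hc1t⟩ := base hn hq h0 hL hk
      refine ⟨fun j => if j = 0 then L 0 else c1, by simp, ?_⟩
      intro i hi1 hi2
      have : i = 1 := by omega
      subst this
      simp only [if_neg (by norm_num : (1:ℕ) ≠ 0), if_pos rfl]
      have hsub : c1 ⊆ L 1 := hc1.trans sdiff_subset
      have hdisj : Disjoint c1 (L 0) :=
        disjoint_sdiff_self_left.mono_left hc1
      refine ⟨hsub, hc1c, hdisj, ?_⟩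
      rwa [show n-1-1 = n-2 from by omega]
    · obtain ⟨c, hc0, hci⟩ := ih (by omega) (by omega)
      obtain ⟨hsubm, hcardm, _, htm⟩ := hci m (by omega) (le_refl m)
      have htm' : tt L n b (n-(m+1)) ≤ ((c m ∩ PP L n (n-(m+1))).card : ℤ) := by
        rwa [show n-(m+1) = n-1-m from by omega]
      obtain ⟨cnew, hcn1, hcn2, hcn3⟩ := step hn hq h0 hL (i := m+1) (by omega) h2
        (by rwa [show m+1-1 = m from rfl]) hcardm htm'
      refine ⟨fun j => if j = m+1 then cnew else c j,
        by simp only [if_neg (show (0:ℕ) ≠ m+1 by omega)]; exact hc0, ?_⟩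
      intro i hi1 hi2
      rcases Nat.lt_or_ge i (m+1) with hlt | hge
      · have hne : i ≠ m+1 := by omega
        have hne' : i - 1 ≠ m+1 := by omega
        simp only [if_neg hne, if_neg hne']
        exact hci i hi1 (by omega)
      · have : i = m+1 := by omega
        subst this
        have hne' : m+1-1 ≠ m+1 := by omega
        simp only [if_pos rfl, if_neg hne']
        rw [show m+1-1 = m from rfl]
        have hsub : cnew ⊆ L (m+1) := hcn1.trans sdiff_subset
        have hdisj : Disjoint cnew (c m) :=
          disjoint_sdiff_self_left.mono_left hcn1
        exact ⟨hsub, hcn2, hdisj, hcn3⟩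

include hn hb hq h0 hL in
lemma core (hk : b ≤ n/2 * (a - 2*b)) :
    ∃ c : ℕ → Finset ℕ, (∀ i, i < n → c i ⊆ L i ∧ (c i).card = b) ∧
      ∀ i, i < n → Disjoint (c i) (c ((i + 1) % n)) := by
  obtain ⟨c, hc0, hci⟩ := chain hn hb hq h0 hL hk (n-1) (by omega) (le_refl _)
  have hlastP : c (n-1) ⊆ PP L n 0 := by
    obtain ⟨hs, hcard, _, ht⟩ := hci (n-1) (by omega) (le_refl _)
    rw [show n-1-(n-1) = 0 from by omega] at ht
    have ht0 : tt L n b 0 = (b:ℤ) := rfl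
    rw [ht0] at ht
    have hble : (c (n-1)).card ≤ (c (n-1) ∩ PP L n 0).card := by
      rw [hcard]; exact_mod_cast ht
    have := eq_of_subset_of_card_le inter_subset_left hble
    rw [← this]
    exact inter_subset_right
  have hlast : Disjoint (c (n-1)) (L 0) :=
    disjoint_sdiff_self_left.mono_left hlastP
  refine ⟨c, ?_, ?_⟩
  · intro i hi
    rcases Nat.eq_zero_or_pos i with h | h
    · subst h; rw [hc0]; exact ⟨Subset.refl _, h0⟩
    · obtain ⟨hs, hcard, _, _⟩ := hci i h (by omega)
      exact ⟨hs, hcard⟩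
  · intro i hi
    rcases Nat.lt_or_ge i (n-1) with hlt | hge
    · have hmod : (i+1) % n = i+1 := Nat.mod_eq_of_lt (by omega)
      rw [hmod]
      obtain ⟨_, _, hdisj, _⟩ := hci (i+1) (by omega) (by omega)
      rw [show i+1-1 = i from rfl] at hdisj
      exact hdisj.symm
    · have : i = n-1 := by omega
      subst this
      have hmod : (n-1+1) % n = 0 := by
        rw [show n-1+1 = n from by omega, Nat.mod_self]
      rw [hmod, hc0]
      exact hlast

end Core

end CycleFreeAux

/-- If `a/b ≥ 2 + 1/⌊n/2⌋` then the cycle `C_n` (vertices `0,…,n-1`, with `i` adjacent to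
`(i+1) % n`) is `(a,b)`-free-choosable. -/
theorem cycle_free_choosable (n a b : ℕ) (hn : 3 ≤ n) (hb : 0 < b)
    (hab : 2 + ((n / 2 : ℕ) : ℚ)⁻¹ ≤ (a : ℚ) / (b : ℚ)) :
    ∀ v0, v0 < n → ∀ L : ℕ → Finset ℕ,
      (L v0).card = b → (∀ v, v < n → v ≠ v0 → (L v).card = a) →
      ∃ c : ℕ → Finset ℕ, (∀ i, i < n → c i ⊆ L i ∧ (c i).card = b) ∧
        ∀ i, i < n → Disjoint (c i) (c ((i + 1) % n)) := by
  intro v0 hv0 L hLv0 hLa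
  -- arithmetic consequences
  have hk0 : 1 ≤ n / 2 := by omega
  have hbQ : (0:ℚ) < (b:ℚ) := by exact_mod_cast hb
  have hkQ : (0:ℚ) < ((n/2 : ℕ):ℚ) := by exact_mod_cast hk0
  have h1 : (2 + ((n / 2 : ℕ) : ℚ)⁻¹) * b ≤ a := by
    rw [← le_div_iff₀ hbQ]; exact hab
  have h2 : ((2*(n/2)+1 : ℕ) : ℚ) * b ≤ (a:ℚ) * ((n/2 : ℕ):ℚ) := by
    have hinv : ((n/2 : ℕ):ℚ)⁻¹ * ((n/2 : ℕ):ℚ) = 1 := inv_mul_cancel₀ (ne_of_gt hkQ)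
    push_cast
    nlinarith [h1, hkQ, hbQ]
  have h2' : (2*(n/2)+1) * b ≤ a * (n/2) := by exact_mod_cast h2
  have hq : 2*b+1 ≤ a := by
    by_contra hcon
    push_neg at hcon
    have hle : a ≤ 2*b := by omega
    have := Nat.mul_le_mul_right (n/2) hle
    nlinarith [h2', hb, this]
  have hk : b ≤ n/2 * (a - 2*b) := by
    have h2b : 2*b ≤ a := by omega
    have he : a - 2*b + 2*b = a := by omega
    have hsum : n/2 * (a - 2*b) + n/2 * (2*b) = n/2 * a := by rw [← Nat.mul_add, he]
    linarith [h2', hsum]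
  -- rotate so the precolored vertex is 0
  set L' : ℕ → Finset ℕ := fun j => L ((j + v0) % n) with hL'
  have hL'0 : (L' 0).card = b := by
    simp only [hL', Nat.zero_add, Nat.mod_eq_of_lt hv0]
    exact hLv0
  have hL'a : ∀ v, v < n → v ≠ 0 → (L' v).card = a := by
    intro v hv hv0'
    apply hLa
    · exact Nat.mod_lt _ (by omega)
    · intro hcon
      have : (v + v0) % n = v0 % n := by rw [hcon, Nat.mod_eq_of_lt hv0]
      have hdvd : n ∣ (v + v0 - v0) := (Nat.modEq_iff_dvd' (by omega)).mp this.symm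
      rw [Nat.add_sub_cancel] at hdvd
      rcases hdvd with ⟨k, hk'⟩
      rcases Nat.eq_zero_or_pos k with h | h
      · subst h
        simp only [Nat.mul_zero] at hk'
        omega
      · have : n ≤ v := by
          calc n = n * 1 := by ring
          _ ≤ n * k := by exact Nat.mul_le_mul_left n h
          _ = v := hk'.symm
        omega
  obtain ⟨c', hc'1, hc'2⟩ := CycleFreeAux.core hn hb hq hL'0 hL'a hk
  refine ⟨fun i => c' ((i + (n - v0)) % n), ?_, ?_⟩
  · intro i hi
    have hj : (i + (n - v0)) % n < n := Nat.mod_lt _ (by omega)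
    have hback : (((i + (n - v0)) % n) + v0) % n = i := by
      rw [Nat.mod_add_mod, Nat.add_assoc, Nat.sub_add_cancel (le_of_lt hv0),
        Nat.add_mod_right, Nat.mod_eq_of_lt hi]
    have := hc'1 _ hj
    rw [hL'] at this
    simp only at this
    rw [hback] at this
    exact this
  · intro i hi
    have hj : (i + (n - v0)) % n < n := Nat.mod_lt _ (by omega)
    have hnext : ((i + 1) % n + (n - v0)) % n = ((i + (n - v0)) % n + 1) % n := by
      rw [Nat.mod_add_mod, Nat.mod_add_mod]
      congr 1
      omega
    show Disjoint (c' ((i + (n - v0)) % n)) (c' (((i + 1) % n + (n - v0)) % n))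
    rw [hnext]
    exact hc'2 _ hj
end

section
/- If b ≥ 1, e ≥ 1 and n is at least the smallest even integer ≥ 2b/e, then the cycle C_n of length n is (2b+e, b)-free-choosable. -/
open Finset

private lemma choose_avoiding (P bad : Finset ℕ) (b : ℕ) (hb : b ≤ P.card) :
    ∃ B : Finset ℕ, B ⊆ P ∧ B.card = b ∧ (B ∩ bad).card + min b (P \ bad).card ≤ b := by
  by_cases h : b ≤ (P \ bad).card
  · obtain ⟨B, hBsub, hBcard⟩ := Finset.exists_subset_card_eq h
    refine ⟨B, hBsub.trans sdiff_subset, hBcard, ?_⟩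
    have hBbad : B ∩ bad = ∅ := by
      apply Finset.eq_empty_of_forall_notMem
      intro x hx
      simp only [Finset.mem_inter] at hx
      exact (Finset.mem_sdiff.mp (hBsub hx.1)).2 hx.2
    simp [hBbad, min_eq_left h]
  · push_neg at h
    obtain ⟨B, hsub1, hsub2, hcard⟩ := Finset.exists_subsuperset_card_eq
      (sdiff_subset : P \ bad ⊆ P) h.le hb
    refine ⟨B, hsub2, hcard, ?_⟩
    have h1 : B ∩ bad ⊆ B \ (P \ bad) := by
      intro x hx
      simp only [Finset.mem_inter] at hx
      simp only [Finset.mem_sdiff, Finset.mem_sdiff]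
      exact ⟨hx.1, fun h' => h'.2 hx.2⟩
    have h2 : (B \ (P \ bad)).card = b - (P \ bad).card := by
      rw [Finset.card_sdiff_of_subset hsub1, hcard]
    have := Finset.card_le_card h1
    omega

private def Yd (M : ℕ → Finset ℕ) (A : Finset ℕ) (N : ℕ) : ℕ → Finset ℕ
  | 0 => A ∩ M (N - 1)
  | j + 1 => (M (N - 1 - j) \ Yd M A N j) ∩ M (N - 2 - j)

private def rhod (M : ℕ → Finset ℕ) (A : Finset ℕ) (N b e : ℕ) : ℕ → ℕ
  | 0 => b + e
  | j + 1 => rhod M A N b e j + (b + e) - (Yd M A N j).card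

private lemma Yd_subset (M : ℕ → Finset ℕ) (A : Finset ℕ) (N : ℕ) :
    ∀ j, Yd M A N j ⊆ M (N - 1 - j) := by
  intro j
  cases j with
  | zero => exact inter_subset_right
  | succ j =>
      have h : N - 1 - (j + 1) = N - 2 - j := by omega
      rw [h, Yd]
      exact inter_subset_right

section Inv

variable {M : ℕ → Finset ℕ} {A : Finset ℕ} {N b e : ℕ}
variable (hA : A.card = b) (hM : ∀ k, 1 ≤ k → k < N → (M k).card = 2 * b + e)

include hA hM in
private lemma inv_Yrho : ∀ j, j + 2 ≤ N →
    (Yd M A N j).card + e ≤ rhod M A N b e j ∧ b + e ≤ rhod M A N b e j := by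
  intro j
  induction j with
  | zero =>
      intro hN
      have h1 : (Yd M A N 0).card ≤ b := by
        rw [← hA]; exact card_le_card inter_subset_left
      constructor
      · simpa [rhod] using by omega
      · simp [rhod]
  | succ j ih =>
      intro hN
      have hj2 : j + 2 ≤ N := by omega
      obtain ⟨ih1, ih2⟩ := ih hj2
      have hMj : (M (N - 1 - j)).card = 2 * b + e := hM _ (by omega) (by omega)
      have hYsub : Yd M A N j ⊆ M (N - 1 - j) := Yd_subset M A N j
      have hpair : (Yd M A N (j+1)).card + (Yd M A N j).card ≤ 2 * b + e := by
        have h1 : Yd M A N (j+1) ⊆ M (N - 1 - j) \ Yd M A N j := by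
          rw [Yd]; exact inter_subset_left
        have h2 := card_le_card h1
        rw [card_sdiff_of_subset hYsub, hMj] at h2
        have h3 := card_le_card hYsub
        omega
      have hrho : rhod M A N b e (j+1) + (Yd M A N j).card
          = rhod M A N b e j + (b + e) := by
        show rhod M A N b e j + (b + e) - (Yd M A N j).card + (Yd M A N j).card = _
        omega
      constructor
      · omega
      · omega

include hA hM in
private lemma rho_succ_eq : ∀ j, j + 2 ≤ N →
    rhod M A N b e (j+1) + (Yd M A N j).card = rhod M A N b e j + (b + e) := by
  intro j hj
  obtain ⟨h1, _⟩ := inv_Yrho hA hM j hj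
  show rhod M A N b e j + (b + e) - (Yd M A N j).card + (Yd M A N j).card = _
  omega

include hM in
private lemma Yd_pair : ∀ j, j + 3 ≤ N →
    (Yd M A N (j+1)).card + (Yd M A N j).card ≤ 2 * b + e := by
  intro j hj
  have hMj : (M (N - 1 - j)).card = 2 * b + e := hM _ (by omega) (by omega)
  have hYsub : Yd M A N j ⊆ M (N - 1 - j) := Yd_subset M A N j
  have h1 : Yd M A N (j+1) ⊆ M (N - 1 - j) \ Yd M A N j := by
    rw [Yd]; exact inter_subset_left
  have h2 := card_le_card h1
  rw [card_sdiff_of_subset hYsub, hMj] at h2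
  have h3 := card_le_card hYsub
  omega

include hA hM in
private lemma final_inv : ∀ j', 2 * j' + 2 ≤ N →
    (Yd M A N (2 * j')).card + (j' + 1) * e ≤ rhod M A N b e (2 * j') := by
  intro j'
  induction j' with
  | zero =>
      intro h
      simpa using (inv_Yrho hA hM 0 (by omega)).1
  | succ j' ih =>
      intro h
      have e1 : rhod M A N b e (2*j' + 2) + (Yd M A N (2*j'+1)).card
          = rhod M A N b e (2*j'+1) + (b + e) := rho_succ_eq hA hM _ (by omega)
      have e2 : rhod M A N b e (2*j' + 1) + (Yd M A N (2*j')).card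
          = rhod M A N b e (2*j') + (b + e) := rho_succ_eq hA hM _ (by omega)
      have e3 : (Yd M A N (2*j'+2)).card + (Yd M A N (2*j'+1)).card ≤ 2 * b + e :=
        Yd_pair hM _ (by omega)
      have ih' := ih (by omega)
      have hx : 2 * (j' + 1) = 2 * j' + 2 := by omega
      rw [hx]
      have hy : (j' + 1 + 1) * e = (j' + 1) * e + e := by ring
      omega

include hA hM in
/-- The suffix construction: from a set `B` at position `τ` satisfying the demand `D j`
(where `τ + j + 2 = N`), we can complete positions `τ+1 .. N-1`. -/
private lemma suffix_lemma : ∀ j τ, τ + (j + 2) = N → ∀ B : Finset ℕ, B.card = b →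
    ((B ∩ M (τ+1)) ∪ Yd M A N j).card ≤ rhod M A N b e j →
    ∃ c : ℕ → Finset ℕ, c τ = B ∧
      (∀ k, τ < k → k < N → c k ⊆ M k ∧ (c k).card = b) ∧
      (∀ k, τ ≤ k → k + 1 < N → Disjoint (c k) (c (k+1))) ∧
      Disjoint (c (N-1)) A := by
  intro j
  induction j with
  | zero =>
      intro τ hτ B hB hD
      have hM1 : (M (τ+1)).card = 2 * b + e := hM _ (by omega) (by omega)
      have hY0 : Yd M A N 0 = A ∩ M (τ+1) := by
        show A ∩ M (N - 1) = _
        have h1 : N - 1 = τ + 1 := by omega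
        rw [h1]
      have hkey : (M (τ+1) ∩ (B ∪ A)) = (B ∩ M (τ+1)) ∪ (A ∩ M (τ+1)) := by
        ext x; simp only [mem_inter, mem_union]; tauto
      have hc1 : ((B ∩ M (τ+1)) ∪ (A ∩ M (τ+1))).card ≤ b + e := by
        rw [← hY0]
        simpa [rhod] using hD
      have hsplit : (M (τ+1) \ (B ∪ A)).card + (M (τ+1) ∩ (B ∪ A)).card = 2 * b + e := by
        rw [card_sdiff_add_card_inter, hM1]
      have hQ : b ≤ (M (τ+1) \ (B ∪ A)).card := by
        rw [hkey] at hsplit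
        omega
      obtain ⟨B', hB'sub, hB'card⟩ := Finset.exists_subset_card_eq hQ
      have hB'M : B' ⊆ M (τ+1) := hB'sub.trans sdiff_subset
      have hB'B : Disjoint B' B := by
        rw [Finset.disjoint_left]
        intro x hx hxB
        have := Finset.mem_sdiff.mp (hB'sub hx)
        exact this.2 (Finset.mem_union_left _ hxB)
      have hB'A : Disjoint B' A := by
        rw [Finset.disjoint_left]
        intro x hx hxA
        have := Finset.mem_sdiff.mp (hB'sub hx)
        exact this.2 (Finset.mem_union_right _ hxA)
      refine ⟨fun k => if k = τ + 1 then B' else B, ?_, ?_, ?_, ?_⟩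
      · dsimp only
        rw [if_neg (show ¬ τ = τ + 1 by omega)]
      · intro k hk1 hk2
        have hk : k = τ + 1 := by omega
        subst hk
        dsimp only
        rw [if_pos rfl]
        exact ⟨hB'M, hB'card⟩
      · intro k hk1 hk2
        dsimp only
        rw [if_neg (show ¬ k = τ + 1 by omega), if_pos (show k + 1 = τ + 1 by omega)]
        exact hB'B.symm
      · dsimp only
        rw [if_pos (show N - 1 = τ + 1 by omega)]
        exact hB'A
  | succ j ih =>
      intro τ hτ B hB hD
      have hM1 : (M (τ+1)).card = 2 * b + e := hM _ (by omega) (by omega)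
      set P := M (τ+1) \ B with hP_def
      set V := M (τ+2) \ Yd M A N j with hV_def
      have hPcard : b ≤ P.card := by
        have h1 : (P).card + (M (τ+1) ∩ B).card = 2 * b + e := by
          rw [card_sdiff_add_card_inter, hM1]
        have h2 : (M (τ+1) ∩ B).card ≤ b := by
          rw [← hB]; exact card_le_card inter_subset_right
        omega
      obtain ⟨B', hB'P, hB'card, hmin⟩ := choose_avoiding P V b hPcard
      -- identify Yd (j+1)
      have hYj1 : Yd M A N (j+1) = V ∩ M (τ+1) := by
        show (M (N - 1 - j) \ Yd M A N j) ∩ M (N - 2 - j) = _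
        have h1 : N - 1 - j = τ + 2 := by omega
        have h2 : N - 2 - j = τ + 1 := by omega
        rw [h1, h2]
      -- G := P \ V and its cardinality identity
      have hG_eq : P \ V = M (τ+1) \ (B ∪ V) := by
        ext x
        simp only [hP_def, mem_sdiff, mem_union]
        tauto
      have hsplit : (M (τ+1) \ (B ∪ V)).card + (M (τ+1) ∩ (B ∪ V)).card = 2 * b + e := by
        rw [card_sdiff_add_card_inter, hM1]
      have hkey : M (τ+1) ∩ (B ∪ V) = (B ∩ M (τ+1)) ∪ Yd M A N (j+1) := by
        rw [hYj1]
        ext x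
        simp only [mem_inter, mem_union]
        tauto
      have hrho : rhod M A N b e (j+1) + (Yd M A N j).card
          = rhod M A N b e j + (b + e) := rho_succ_eq hA hM j (by omega)
      have hinv := (inv_Yrho hA hM j (by omega)).1
      -- b + |Y j| ≤ |G| + rho j
      have hstar : b + (Yd M A N j).card ≤ (P \ V).card + rhod M A N b e j := by
        rw [hG_eq]
        rw [hkey] at hsplit
        omega
      -- demand for B' at position τ+1
      have hBV : (B' ∩ V).card + (Yd M A N j).card ≤ rhod M A N b e j := by omega
      have hsub2 : (B' ∩ M (τ+2)) ∪ Yd M A N j ⊆ (B' ∩ V) ∪ Yd M A N j := by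
        intro x hx
        simp only [mem_union, mem_inter, hV_def, mem_sdiff] at hx ⊢
        tauto
      have hD' : ((B' ∩ M (τ+2)) ∪ Yd M A N j).card ≤ rhod M A N b e j := by
        calc ((B' ∩ M (τ+2)) ∪ Yd M A N j).card ≤ ((B' ∩ V) ∪ Yd M A N j).card :=
              card_le_card hsub2
          _ ≤ (B' ∩ V).card + (Yd M A N j).card := card_union_le _ _
          _ ≤ rhod M A N b e j := hBV
      obtain ⟨c, hcB', hcmem, hcdisj, hcA⟩ := ih (τ+1) (by omega) B' hB'card hD'
      have hBB' : Disjoint B B' := by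
        rw [Finset.disjoint_right]
        intro x hx hxB
        exact (Finset.mem_sdiff.mp (hB'P hx)).2 hxB
      refine ⟨fun k => if k = τ then B else c k, ?_, ?_, ?_, ?_⟩
      · dsimp only
        rw [if_pos rfl]
      · intro k hk1 hk2
        dsimp only
        rw [if_neg (show ¬ k = τ by omega)]
        rcases eq_or_lt_of_le (Nat.succ_le_of_lt hk1) with h | h
        · rw [← h, hcB']
          exact ⟨hB'P.trans sdiff_subset, hB'card⟩
        · exact hcmem k h hk2
      · intro k hk1 hk2
        dsimp only
        rcases eq_or_lt_of_le hk1 with h | h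
        · rw [if_pos (show k = τ by omega), if_neg (show ¬ k + 1 = τ by omega),
            show k + 1 = τ + 1 by omega, hcB']
          exact hBB'
        · rw [if_neg (show ¬ k = τ by omega), if_neg (show ¬ k + 1 = τ by omega)]
          exact hcdisj k (by omega) hk2
      · dsimp only
        rw [if_neg (show ¬ N - 1 = τ by omega)]
        exact hcA

include hA hM in
private lemma prefix_lemma : ∀ t, t + 2 ≤ N →
    ∃ c : ℕ → Finset ℕ, c 0 = A ∧
      (∀ k, 1 ≤ k → k ≤ t → c k ⊆ M k ∧ (c k).card = b) ∧
      (∀ k, k + 1 ≤ t → Disjoint (c k) (c (k+1))) := by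
  intro t
  induction t with
  | zero =>
      intro _
      exact ⟨fun _ => A, rfl, fun k hk1 hk2 => by omega, fun k hk => by omega⟩
  | succ t ih =>
      intro ht
      obtain ⟨c, hc0, hcmem, hcdisj⟩ := ih (by omega)
      have hct : (c t).card = b := by
        rcases Nat.eq_zero_or_pos t with h | h
        · rw [h, hc0, hA]
        · exact (hcmem t h le_rfl).2
      have hM1 : (M (t+1)).card = 2 * b + e := hM _ (by omega) (by omega)
      have hsplit : (M (t+1) \ c t).card + (M (t+1) ∩ c t).card = 2 * b + e := by
        rw [card_sdiff_add_card_inter, hM1]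
      have h2 : (M (t+1) ∩ c t).card ≤ b := by
        rw [← hct]; exact card_le_card inter_subset_right
      have hQ : b ≤ (M (t+1) \ c t).card := by omega
      obtain ⟨B', hB'sub, hB'card⟩ := Finset.exists_subset_card_eq hQ
      have hdisj : Disjoint (c t) B' := by
        rw [Finset.disjoint_right]
        intro x hx
        exact (Finset.mem_sdiff.mp (hB'sub hx)).2
      refine ⟨fun k => if k = t + 1 then B' else c k, ?_, ?_, ?_⟩
      · dsimp only
        rw [if_neg (show ¬ (0:ℕ) = t + 1 by omega)]
        exact hc0
      · intro k hk1 hk2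
        dsimp only
        rcases eq_or_lt_of_le hk2 with h | h
        · subst h
          rw [if_pos rfl]
          exact ⟨hB'sub.trans sdiff_subset, hB'card⟩
        · rw [if_neg (show ¬ k = t + 1 by omega)]
          exact hcmem k hk1 (by omega)
      · intro k hk
        dsimp only
        rcases eq_or_lt_of_le hk with h | h
        · rw [if_neg (show ¬ k = t + 1 by omega), if_pos (show k + 1 = t + 1 from h),
            show k = t by omega]
          exact hdisj
        · rw [if_neg (show ¬ k = t + 1 by omega), if_neg (show ¬ k + 1 = t + 1 by omega)]
          exact hcdisj k (by omega)

include hA hM in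
private lemma path_core (m : ℕ) (hm : 1 ≤ m) (hme : b ≤ m * e) (hN : 2 * m ≤ N) :
    ∃ c : ℕ → Finset ℕ, c 0 = A ∧
      (∀ k, 1 ≤ k → k < N → c k ⊆ M k ∧ (c k).card = b) ∧
      (∀ k, k + 1 < N → Disjoint (c k) (c (k+1))) ∧
      Disjoint (c (N-1)) A := by
  set t := N - 2 * m with ht_def
  set j := 2 * m - 2 with hj_def
  obtain ⟨cp, hcp0, hcpmem, hcpdisj⟩ := prefix_lemma hA hM t (by omega)
  have hBcard : (cp t).card = b := by
    rcases Nat.eq_zero_or_pos t with h | h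
    · rw [h, hcp0, hA]
    · exact (hcpmem t h le_rfl).2
  have hfin := final_inv hA hM (m - 1) (by omega)
  have hj : 2 * (m - 1) = j := by omega
  rw [hj] at hfin
  have hdemand : ((cp t ∩ M (t+1)) ∪ Yd M A N j).card ≤ rhod M A N b e j := by
    have h1 : ((cp t ∩ M (t+1)) ∪ Yd M A N j).card
        ≤ (cp t ∩ M (t+1)).card + (Yd M A N j).card := card_union_le _ _
    have h2 : (cp t ∩ M (t+1)).card ≤ b := by
      rw [← hBcard]; exact card_le_card inter_subset_left
    have h4 : (m - 1 + 1) * e = m * e := by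
      congr 1
      omega
    rw [h4] at hfin
    omega
  obtain ⟨cs, hcsB, hcsmem, hcsdisj, hcsA⟩ :=
    suffix_lemma hA hM j t (by omega) (cp t) hBcard hdemand
  refine ⟨fun k => if k ≤ t then cp k else cs k, ?_, ?_, ?_, ?_⟩
  · dsimp only
    rw [if_pos (show (0:ℕ) ≤ t by omega)]
    exact hcp0
  · intro k hk1 hk2
    dsimp only
    by_cases h : k ≤ t
    · rw [if_pos h]
      exact hcpmem k hk1 h
    · rw [if_neg h]
      exact hcsmem k (by omega) hk2
  · intro k hk
    dsimp only
    by_cases h : k + 1 ≤ t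
    · rw [if_pos (show k ≤ t by omega), if_pos h]
      exact hcpdisj k h
    · rw [if_neg h]
      by_cases h2 : k ≤ t
      · have hkt : k = t := by omega
        rw [if_pos h2, hkt, ← hcsB]
        exact hcsdisj t le_rfl (by omega)
      · rw [if_neg h2]
        exact hcsdisj k (by omega) hk
  · dsimp only
    rw [if_neg (show ¬ N - 1 ≤ t by omega)]
    exact hcsA

end Inv

/-- If `n ≥ Even(2b/e) = 2⌈b/e⌉` then the cycle `C_n` is `(2b+e, b)`-free-choosable. -/
theorem cycle_free_choosable_of_length (n b e : ℕ) (hb : 1 ≤ b) (he : 1 ≤ e)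
    (hn : 2 * ⌈(b : ℚ) / (e : ℚ)⌉₊ ≤ n) :
    ∀ v0, v0 < n → ∀ L : ℕ → Finset ℕ,
      (L v0).card = b → (∀ v, v < n → v ≠ v0 → (L v).card = 2 * b + e) →
      ∃ c : ℕ → Finset ℕ, (∀ i, i < n → c i ⊆ L i ∧ (c i).card = b) ∧
        ∀ i, i < n → Disjoint (c i) (c ((i + 1) % n)) := by
  intro v0 hv0 L hL0 hL
  set m := ⌈(b : ℚ) / (e : ℚ)⌉₊ with hm_def
  have he' : (0:ℚ) < (e:ℚ) := by exact_mod_cast he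
  have hm1 : 1 ≤ m := by
    rw [hm_def]
    rw [Nat.one_le_iff_ne_zero, ← Nat.pos_iff_ne_zero, Nat.ceil_pos]
    apply div_pos _ he'
    exact_mod_cast hb
  have hme : b ≤ m * e := by
    have h1 : (b:ℚ)/(e:ℚ) ≤ (m:ℚ) := Nat.le_ceil _
    rw [div_le_iff₀ he'] at h1
    exact_mod_cast h1
  have hn2 : 2 * m ≤ n := hn
  have hn0 : 0 < n := by omega
  set M : ℕ → Finset ℕ := fun k => L ((v0 + k) % n) with hM_def
  have hMk : ∀ k, 1 ≤ k → k < n → (M k).card = 2 * b + e := by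
    intro k hk1 hk2
    apply hL
    · exact Nat.mod_lt _ hn0
    · intro hcon
      rcases lt_or_ge (v0 + k) n with h | h
      · rw [Nat.mod_eq_of_lt h] at hcon; omega
      · have h2 : (v0 + k) % n = (v0 + k - n) % n := Nat.mod_eq_sub_mod h
        rw [h2, Nat.mod_eq_of_lt (by omega)] at hcon
        omega
  have hA0 : (L v0).card = b := hL0
  obtain ⟨cp, hc0, hcmem, hcdisj, hclast⟩ :=
    path_core (M := M) (A := L v0) (N := n) hA0 hMk m hm1 hme hn2
  have key : ∀ v, v < n → (v0 + (v + (n - v0)) % n) % n = v := by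
    intro v hv
    rw [Nat.add_mod_mod]
    have h2 : v0 + (v + (n - v0)) = v + n := by omega
    rw [h2, Nat.add_mod_right, Nat.mod_eq_of_lt hv]
  refine ⟨fun v => cp ((v + (n - v0)) % n), ?_, ?_⟩
  · intro i hi
    dsimp only
    set k := (i + (n - v0)) % n with hk_def
    have hkn : k < n := Nat.mod_lt _ hn0
    have hki : (v0 + k) % n = i := key i hi
    rcases Nat.eq_zero_or_pos k with h | h
    · have hiv0 : i = v0 := by
        rw [h, Nat.add_zero, Nat.mod_eq_of_lt hv0] at hki
        omega
      rw [h, hc0, hiv0]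
      exact ⟨subset_rfl, hL0⟩
    · have hmem := hcmem k h hkn
      have hMkL : M k = L i := congrArg L hki
      rw [hMkL] at hmem
      exact hmem
  · intro i hi
    dsimp only
    set k := (i + (n - v0)) % n with hk_def
    have hkn : k < n := Nat.mod_lt _ hn0
    have hk' : ((i + 1) % n + (n - v0)) % n = (k + 1) % n := by
      rw [Nat.mod_add_mod, hk_def, Nat.mod_add_mod]
      congr 1
      omega
    rw [hk']
    rcases lt_or_ge (k + 1) n with h | h
    · rw [Nat.mod_eq_of_lt h]
      exact hcdisj k h
    · have hkn1 : k + 1 = n := by omega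
      have h0 : (k + 1) % n = 0 := by rw [hkn1, Nat.mod_self]
      rw [h0, hc0, show k = n - 1 by omega]
      exact hclast
end

section
/- For every even n ≥ 4 and positive integers a, b with a/b < 2 + 1/⌊n/2⌋ (equivalently a⌊n/2⌋ < 2b⌊n/2⌋ + b), the cycle C_n is not (a,b)-free-choosable: there exists a vertex v_0 and a list assignment L with |L(v_0)| = b and |L(v)| = a for v ≠ v_0 admitting no (L,b)-coloring. -/
private lemma aux_card_le {A B : Finset ℕ} (S : Finset ℕ) (h : Disjoint A B) :
    (A ∩ S).card + (B ∩ S).card ≤ S.card := by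
  have hdisj : Disjoint (A ∩ S) (B ∩ S) :=
    h.mono Finset.inter_subset_left Finset.inter_subset_left
  rw [← Finset.card_union_of_disjoint hdisj]
  exact Finset.card_le_card
    (Finset.union_subset Finset.inter_subset_right Finset.inter_subset_right)

private lemma aux_split (c : Finset ℕ) {x y z : ℕ} (h1 : x ≤ y) (h2 : y ≤ z) :
    (c ∩ Finset.Ico x z).card = (c ∩ Finset.Ico x y).card + (c ∩ Finset.Ico y z).card := by
  have hdisj : Disjoint (c ∩ Finset.Ico x y) (c ∩ Finset.Ico y z) :=
    (Finset.Ico_disjoint_Ico_consecutive x y z).mono Finset.inter_subset_right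
      Finset.inter_subset_right
  rw [← Finset.Ico_union_Ico_eq_Ico h1 h2, Finset.inter_union_distrib_left,
    Finset.card_union_of_disjoint hdisj]

private def Lfun (a b k : ℕ) (v : ℕ) : Finset ℕ :=
  if v = 0 then Finset.Ico 0 b
  else if v = 2*k - 1 then Finset.Ico 0 b ∪ Finset.Ico ((k-1)*a) (k*a - b)
  else if v % 2 = 1 then Finset.Ico ((v/2)*a) ((v/2)*a + a)
  else Finset.Ico ((v/2-1)*a + b) ((v/2-1)*a + a + b)

private lemma Lfun_zero (a b k : ℕ) : Lfun a b k 0 = Finset.Ico 0 b := by simp [Lfun]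

private lemma Lfun_odd (a b k j : ℕ) (hj : j + 2 ≤ k) :
    Lfun a b k (2*j+1) = Finset.Ico (j*a) (j*a + a) := by
  have h0 : ¬ (2*j+1 = 0) := by omega
  have h1 : ¬ (2*j+1 = 2*k-1) := by omega
  have h2 : (2*j+1) % 2 = 1 := by omega
  have h3 : (2*j+1)/2 = j := by omega
  simp [Lfun, h0, h1, h2, h3]

private lemma Lfun_even (a b k j : ℕ) :
    Lfun a b k (2*j+2) = Finset.Ico (j*a + b) (j*a + a + b) := by
  have h0 : ¬ (2*j+2 = 0) := by omega
  have h1 : ¬ (2*j+2 = 2*k-1) := by omega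
  have h2 : ¬ ((2*j+2) % 2 = 1) := by omega
  have h3 : (2*j+2)/2 - 1 = j := by omega
  simp [Lfun, h0, h1, h2, h3]

private lemma Lfun_last (a b k : ℕ) (hk : 1 ≤ k) :
    Lfun a b k (2*k-1) = Finset.Ico 0 b ∪ Finset.Ico ((k-1)*a) (k*a - b) := by
  have h0 : ¬ (2*k-1 = 0) := by omega
  simp [Lfun, h0]

/-- For even `n ≥ 4` and `a/b < 2 + 1/⌊n/2⌋` (i.e. `a·⌊n/2⌋ < 2b·⌊n/2⌋ + b`), the cycle
`C_n` is not `(a,b)`-free-choosable. -/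
theorem cycle_not_free_choosable (n a b : ℕ) (hn : 4 ≤ n) (heven : Even n)
    (ha : 0 < a) (hb : 0 < b) (hab : a * (n / 2) < 2 * b * (n / 2) + b) :
    ∃ v0, v0 < n ∧ ∃ L : ℕ → Finset ℕ,
      (L v0).card = b ∧ (∀ v, v < n → v ≠ v0 → (L v).card = a) ∧
      ¬ ∃ c : ℕ → Finset ℕ, (∀ i, i < n → c i ⊆ L i ∧ (c i).card = b) ∧
        ∀ i, i < n → Disjoint (c i) (c ((i + 1) % n)) := by
  by_cases hcase : a < 2*b
  · -- trivial case: `a < 2b`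
    refine ⟨0, by omega, fun v => if v = 0 then Finset.Ico 0 b else Finset.Ico 0 a,
      by simp, ?_, ?_⟩
    · intro v hv hv0; simp [hv0]
    · rintro ⟨c, hc, hd⟩
      have h0n : 0 < n := by omega
      have hc0 : c 0 = Finset.Ico 0 b := by
        refine Finset.eq_of_subset_of_card_le ?_ ?_
        · have := (hc 0 h0n).1; simpa using this
        · rw [(hc 0 h0n).2]; simp
      have hn1 : n - 1 < n := by omega
      have hdl : Disjoint (c (n-1)) (c 0) := by
        have h := hd (n-1) hn1
        rwa [Nat.sub_add_cancel (by omega), Nat.mod_self] at h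
      have hsub : c (n-1) ⊆ Finset.Ico b a := by
        intro x hx
        have h1 := (hc (n-1) hn1).1 hx
        have h2 : x ∉ c 0 := Finset.disjoint_left.mp hdl hx
        rw [hc0] at h2
        simp only [if_neg (show ¬ (n-1=0) by omega)] at h1
        simp only [Finset.mem_Ico] at h1 h2 ⊢
        omega
      have hle := Finset.card_le_card hsub
      rw [(hc (n-1) hn1).2, Nat.card_Ico] at hle
      omega
  · -- main case: `2b ≤ a`
    push_neg at hcase
    obtain ⟨k, rfl⟩ := heven
    obtain ⟨m, rfl⟩ : ∃ m, k = m + 2 := ⟨k - 2, by omega⟩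
    refine ⟨0, by omega, Lfun a b (m+2), ?_, ?_, ?_⟩
    · rw [Lfun_zero]; simp
    · intro v hv hv0
      by_cases hlast : v = 2*(m+2)-1
      · subst hlast
        rw [Lfun_last a b (m+2) (by omega)]
        have hdisj : Disjoint (Finset.Ico 0 b) (Finset.Ico ((m+2-1)*a) ((m+2)*a - b)) := by
          rw [Finset.disjoint_left]
          intro x hx hx'
          simp only [Finset.mem_Ico] at hx hx'
          have hma : a ≤ (m+2-1)*a := Nat.le_mul_of_pos_left a (by omega)
          omega
        rw [Finset.card_union_of_disjoint hdisj, Nat.card_Ico, Nat.card_Ico]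
        rw [show (m+2)*a = (m+2-1)*a + a from by rw [show m+2-1 = m+1 from rfl]; ring]
        generalize (m+2-1)*a = M
        omega
      · rcases Nat.even_or_odd v with hev | hod
        · obtain ⟨t, rfl⟩ := hev
          obtain ⟨j, hj⟩ : ∃ j, t + t = 2*j+2 := ⟨t-1, by omega⟩
          rw [hj, Lfun_even, Nat.card_Ico]
          generalize j*a = M
          omega
        · obtain ⟨t, rfl⟩ := hod
          rw [Lfun_odd a b (m+2) t (by omega), Nat.card_Ico]
          generalize t*a = M
          omega
    · rintro ⟨c, hc, hd⟩
      have hba : b ≤ a := by omega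
      have hc0 : c 0 = Finset.Ico 0 b := by
        refine Finset.eq_of_subset_of_card_le ?_ ?_
        · have := (hc 0 (by omega)).1; rwa [Lfun_zero] at this
        · rw [(hc 0 (by omega)).2]; simp
      have hadj : ∀ i, i + 1 < (m+2)+(m+2) → Disjoint (c i) (c (i+1)) := by
        intro i hi
        have h := hd i (by omega)
        rwa [Nat.mod_eq_of_lt hi] at h
      have key : ∀ j, j + 2 ≤ m + 2 →
          b ≤ (c (2*j+1) ∩ Finset.Ico (j*a+b) (j*a+a)).card + j*(a-2*b) := by
        intro j
        induction j with
        | zero =>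
          intro _
          have hsub1 : c 1 ⊆ Finset.Ico b a := by
            intro x hx
            have h1 := (hc 1 (by omega)).1 hx
            rw [show (1:ℕ) = 2*0+1 from by norm_num,
              Lfun_odd a b (m+2) 0 (by omega)] at h1
            have h2 : x ∉ c 0 := Finset.disjoint_right.mp (hadj 0 (by omega)) hx
            rw [hc0] at h2
            simp only [Finset.mem_Ico, zero_mul, zero_add, not_and, not_lt] at h1 h2 ⊢
            exact ⟨h2 x.zero_le, h1.2⟩
          norm_num
          rw [Finset.inter_eq_left.mpr hsub1, (hc 1 (by omega)).2]
        | succ i ih =>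
          intro hj
          have hp := ih (by omega)
          have hsub2 : c (2*i+2) ⊆ Finset.Ico (i*a+b) (i*a+a+b) := by
            have h := (hc (2*i+2) (by omega)).1
            rwa [Lfun_even] at h
          have hsplit2 := aux_split (c (2*i+2)) (x := i*a+b) (y := i*a+a) (z := i*a+a+b)
            (Nat.add_le_add_left hba _) (Nat.le_add_right _ b)
          rw [Finset.inter_eq_left.mpr hsub2, (hc (2*i+2) (by omega)).2] at hsplit2
          have hd12 : Disjoint (c (2*i+1)) (c (2*i+2)) := by
            rw [show 2*i+2 = 2*i+1+1 from by ring]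
            exact hadj (2*i+1) (by omega)
          have haux1 := aux_card_le (Finset.Ico (i*a+b) (i*a+a)) hd12
          rw [Nat.card_Ico] at haux1
          have hsub3 : c (2*(i+1)+1) ⊆ Finset.Ico (i*a+a) (i*a+a+a) := by
            have h := (hc (2*(i+1)+1) (by omega)).1
            rw [Lfun_odd a b (m+2) (i+1) (by omega),
              show (i+1)*a = i*a+a from by ring] at h
            exact h
          have hsplit3 := aux_split (c (2*(i+1)+1)) (x := i*a+a) (y := i*a+a+b) (z := i*a+a+a)
            (Nat.le_add_right _ b) (Nat.add_le_add_left hba _)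
          rw [Finset.inter_eq_left.mpr hsub3, (hc (2*(i+1)+1) (by omega)).2] at hsplit3
          have hd23 : Disjoint (c (2*i+2)) (c (2*(i+1)+1)) := by
            rw [show 2*(i+1)+1 = 2*i+2+1 from by ring]
            exact hadj (2*i+2) (by omega)
          have haux2 := aux_card_le (Finset.Ico (i*a+a) (i*a+a+b)) hd23
          rw [Nat.card_Ico] at haux2
          rw [show (i+1)*a+b = i*a+a+b from by ring, show (i+1)*a+a = i*a+a+a from by ring,
            show (i+1)*(a-2*b) = i*(a-2*b)+(a-2*b) from by ring]
          obtain ⟨P, hP⟩ : ∃ P, i*(a-2*b) = P := ⟨_, rfl⟩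
          rw [hP] at hp ⊢
          obtain ⟨M, hM⟩ : ∃ M, i*a = M := ⟨_, rfl⟩
          rw [hM] at hp hsplit2 haux1 hsplit3 haux2 ⊢
          omega
      -- final contradiction
      have hpm := key m (by omega)
      have hsub2 : c (2*m+2) ⊆ Finset.Ico (m*a+b) (m*a+a+b) := by
        have h := (hc (2*m+2) (by omega)).1
        rwa [Lfun_even] at h
      have hsplit2 := aux_split (c (2*m+2)) (x := m*a+b) (y := m*a+a) (z := m*a+a+b)
        (Nat.add_le_add_left hba _) (Nat.le_add_right _ b)
      rw [Finset.inter_eq_left.mpr hsub2, (hc (2*m+2) (by omega)).2] at hsplit2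
      have hd12 : Disjoint (c (2*m+1)) (c (2*m+2)) := by
        rw [show 2*m+2 = 2*m+1+1 from by ring]
        exact hadj (2*m+1) (by omega)
      have haux1 := aux_card_le (Finset.Ico (m*a+b) (m*a+a)) hd12
      rw [Nat.card_Ico] at haux1
      have hdl : Disjoint (c (2*m+3)) (c 0) := by
        have h := hd (2*m+3) (by omega)
        rwa [show 2*m+3+1 = (m+2)+(m+2) from by omega, Nat.mod_self] at h
      have hsubl : c (2*m+3) ⊆ Finset.Ico (m*a+a) (m*a+a+(a-b)) := by
        intro x hx
        have h1 := (hc (2*m+3) (by omega)).1 hx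
        rw [show 2*m+3 = 2*(m+2)-1 from by omega, Lfun_last a b (m+2) (by omega)] at h1
        have h2 : x ∉ c 0 := Finset.disjoint_left.mp hdl hx
        rw [hc0] at h2
        rw [Finset.mem_union] at h1
        rcases h1 with h1 | h1
        · exact absurd h1 h2
        · rw [Finset.mem_Ico] at h1 ⊢
          rw [show (m+2-1)*a = m*a+a from by rw [show m+2-1 = m+1 from rfl]; ring,
            show (m+2)*a = m*a+a+a from by ring] at h1
          obtain ⟨M, hM⟩ : ∃ M, m*a = M := ⟨_, rfl⟩
          rw [hM] at h1 ⊢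
          omega
      have hsplitl := aux_split (c (2*m+3)) (x := m*a+a) (y := m*a+a+b) (z := m*a+a+(a-b))
        (Nat.le_add_right _ b) (Nat.add_le_add_left (by omega) _)
      rw [Finset.inter_eq_left.mpr hsubl, (hc (2*m+3) (by omega)).2] at hsplitl
      have hd2l : Disjoint (c (2*m+2)) (c (2*m+3)) := by
        rw [show 2*m+3 = 2*m+2+1 from by ring]
        exact hadj (2*m+2) (by omega)
      have haux2 := aux_card_le (Finset.Ico (m*a+a) (m*a+a+b)) hd2l
      rw [Nat.card_Ico] at haux2
      have hup : (c (2*m+3) ∩ Finset.Ico (m*a+a+b) (m*a+a+(a-b))).card ≤ (a-b) - b := by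
        have h : (c (2*m+3) ∩ Finset.Ico (m*a+a+b) (m*a+a+(a-b))).card ≤
            (Finset.Ico (m*a+a+b) (m*a+a+(a-b))).card :=
          Finset.card_le_card Finset.inter_subset_right
        rw [Nat.card_Ico] at h
        obtain ⟨M, hM⟩ : ∃ M, m*a = M := ⟨_, rfl⟩
        rw [hM] at h ⊢
        omega
      have hab' : a*(m+2) < 2*b*(m+2) + b := by
        have h : ((m+2)+(m+2))/2 = m+2 := by omega
        rw [h] at hab
        calc a*(m+2) = a * (m+2) := rfl
        _ < 2*b*(m+2) + b := hab
      obtain ⟨P, hP⟩ : ∃ P, m*(a-2*b) = P := ⟨_, rfl⟩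
      rw [hP] at hpm
      obtain ⟨M, hM⟩ : ∃ M, m*a = M := ⟨_, rfl⟩
      rw [hM] at hpm hsplit2 haux1 hsplitl haux2 hup
      have hmain : b ≤ 2*(a-2*b) + P := by omega
      have h4 : (m+2)*(a-2*b) = P + 2*(a-2*b) := by rw [← hP]; ring
      have h2 : (m+2)*(a-2*b) + 2*b*(m+2) = a*(m+2) := by
        calc (m+2)*(a-2*b) + 2*b*(m+2) = (a-2*b+2*b)*(m+2) := by ring
        _ = a*(m+2) := by rw [show a-2*b+2*b = a from by omega]
      rw [h4] at h2
      obtain ⟨Q, hQ⟩ : ∃ Q, 2*b*(m+2) = Q := ⟨_, rfl⟩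
      rw [hQ] at h2 hab'
      obtain ⟨R, hR⟩ : ∃ R, a*(m+2) = R := ⟨_, rfl⟩
      rw [hR] at h2 hab'
      omega
end

section
/- The free-choice ratio of the cycle C_n equals 2 + 1/⌊n/2⌋, i.e., inf{a/b : C_n is (a,b)-free-choosable} = 2 + 1/⌊n/2⌋, and moreover C_n is (a,b)-free-choosable for every pair (a,b) with a/b ≥ 2 + 1/⌊n/2⌋. -/
/-- The cycle `C_n` on vertices `0,…,n-1` is `(a,b)`-free-choosable. -/
def CycleFreeChoosable (n a b : ℕ) : Prop :=
  ∀ v0, v0 < n → ∀ L : ℕ → Finset ℕ,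
    (L v0).card = b → (∀ v, v < n → v ≠ v0 → (L v).card = a) →
    ∃ c : ℕ → Finset ℕ, (∀ i, i < n → c i ⊆ L i ∧ (c i).card = b) ∧
      ∀ i, i < n → Disjoint (c i) (c ((i + 1) % n))

/-!
Write `a = 2b + s` and `k = ⌊n/2⌋`; for `b > 0` the condition `a/b ≥ 2 + 1/k` says
`(2k+1)b ≤ ka`, i.e. `2b ≤ a` and `b ≤ ks`.

Sufficiency. Rotate the special vertex to `0`; its colour set is forced to be `L₀`. Working
backwards from vertex `n-1`, which must avoid `L₀`, attach to every vertex `j` a set `Sⱼ ⊆ Lⱼ` and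
a demand `dⱼ`, with `S_{n-1} = L_{n-1} \ L₀`, `d_{n-1} = b`, `S_{j-1} = L_{j-1} \ Sⱼ` and
`d_{j-1} = dⱼ + b - |Sⱼ|`. If `c_{j-1}` has at least `d_{j-1}` colours in `S_{j-1}`, it has at
most `b - d_{j-1}` in the disjoint set `Sⱼ`, which leaves `dⱼ` colours of `Sⱼ` for `cⱼ`; so a
greedy colouring from vertex `0` meets every demand, and `c_{n-1} ⊆ S_{n-1}` closes the cycle. It
gets started because consecutive `Sⱼ` cover a list of size `2b + s`, so summing in pairs gives
`d₀ ≤ 0` when `b ≤ ks`.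

Necessity. Two adjacent vertices with the same list force `2b ≤ a`. Then give vertex `0` a list
`W₀` of size `b` and vertex `i` the list `W_{i-1} ∪ Wᵢ`, where `|Wᵢ| = b + (i mod 2)s`, consecutive
`Wᵢ` are disjoint and `W_{n-1} ⊇ W₀`. For adjacent colour sets, `|cᵢ ∩ Wᵢ|` exceeds
`|c_{i+1} ∩ W_{i+1}|` by at most `|Wᵢ| - b`; once around the cycle, from `|c₀ ∩ W₀| = b` to
`c₀ ∩ Wₙ = ∅`, this gives `b ≤ ks`.
-/

open Finset

namespace Finset

variable {α : Type*} [DecidableEq α]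

theorem card_inter_add_card_inter_of_disjoint {s U V : Finset α} (h : Disjoint U V) :
    #(s ∩ U) + #(s ∩ V) = #(s ∩ (U ∪ V)) := by
  rw [inter_union_distrib_left,
    card_union_of_disjoint (h.mono inter_subset_right inter_subset_right)]

theorem card_inter_add_card_inter_le {s U V : Finset α} (h : Disjoint U V) :
    #(s ∩ U) + #(s ∩ V) ≤ #s :=
  (card_inter_add_card_inter_of_disjoint h).trans_le (card_le_card inter_subset_left)

theorem exists_subset_card_eq_le_card_inter {A R : Finset α} {b : ℕ} {r : ℤ}
    (hb : b ≤ #A) (hr : r ≤ #(A ∩ R)) (hrb : r ≤ b) :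
    ∃ C ⊆ A, #C = b ∧ r ≤ #(C ∩ R) := by
  obtain ⟨D, hDAR, hD⟩ := exists_subset_card_eq (min_le_right b #(A ∩ R))
  obtain ⟨C, hDC, hCA, hC⟩ :=
    exists_subsuperset_card_eq (hDAR.trans inter_subset_left) (hD ▸ min_le_left _ _) hb
  refine ⟨C, hCA, hC, ?_⟩
  have hDCR : D ⊆ C ∩ R := subset_inter hDC (hDAR.trans inter_subset_right)
  calc r ≤ #D := by rw [hD]; push_cast; exact le_min hrb hr
    _ ≤ #(C ∩ R) := by exact_mod_cast card_le_card hDCR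

end Finset

theorem le_sum_range_of_le_add_succ (f : ℕ → ℕ) (A : ℕ) :
    ∀ m, (∀ u, u + 1 < m → A ≤ f u + f (u + 1)) → m % 2 * f 0 + m / 2 * A ≤ ∑ u ∈ range m, f u
  | 0, _ => by simp
  | 1, _ => by simp
  | m + 2, h => by
    have ih := le_sum_range_of_le_add_succ f A m fun u hu => h u (by omega)
    have hm := h m (by omega)
    rw [sum_range_succ, sum_range_succ, Nat.add_mod_right, Nat.add_div_right _ two_pos, add_mul]
    omega

theorem sum_range_mod_two (n : ℕ) : ∑ i ∈ range n, i % 2 = n / 2 := by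
  induction n using Nat.twoStepInduction with
  | zero => rfl
  | one => rfl
  | more n ih _ =>
    rw [sum_range_succ, sum_range_succ, ih]
    omega

def IsCycleColoring {α : Type*} (n b : ℕ) (L c : ℕ → Finset α) : Prop :=
  (∀ i, i < n → c i ⊆ L i ∧ #(c i) = b) ∧ ∀ i, i < n → Disjoint (c i) (c ((i + 1) % n))

theorem IsCycleColoring.rotate {α : Type*} {n b v₀ : ℕ} {L c : ℕ → Finset α} (hv₀ : v₀ < n)
    (h : IsCycleColoring n b (fun i => L ((v₀ + i) % n)) c) :
    IsCycleColoring n b L (fun i => c ((i + (n - v₀)) % n)) := by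
  have hn : 0 < n := by omega
  refine ⟨fun i hi => ?_, fun i hi => ?_⟩
  · have hback : (v₀ + (i + (n - v₀)) % n) % n = i := by
      rw [Nat.add_mod_mod, show v₀ + (i + (n - v₀)) = i + n by omega, Nat.add_mod_right,
        Nat.mod_eq_of_lt hi]
    have := h.1 ((i + (n - v₀)) % n) (Nat.mod_lt _ hn)
    simp only [hback] at this
    exact this
  · have hshift : ((i + 1) % n + (n - v₀)) % n = ((i + (n - v₀)) % n + 1) % n := by
      rw [Nat.mod_add_mod, Nat.mod_add_mod, Nat.add_right_comm]
    have := h.2 ((i + (n - v₀)) % n) (Nat.mod_lt _ hn)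
    rw [← hshift] at this
    exact this

theorem cycleFreeChoosable_of_forall_zero {n a b : ℕ}
    (h : ∀ L : ℕ → Finset ℕ, #(L 0) = b → (∀ v, v < n → v ≠ 0 → #(L v) = a) →
      ∃ c, IsCycleColoring n b L c) :
    CycleFreeChoosable n a b := by
  intro v₀ hv₀ L hL₀ hL
  have hne (v : ℕ) (hv : v < n) (hv0 : v ≠ 0) : (v₀ + v) % n ≠ v₀ := by
    rcases Nat.lt_or_ge (v₀ + v) n with h' | h'
    · rw [Nat.mod_eq_of_lt h']
      omega
    · rw [Nat.mod_eq_sub_mod h', Nat.mod_eq_of_lt (by omega)]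
      omega
  obtain ⟨c, hc⟩ := h (fun i => L ((v₀ + i) % n)) (by simpa [Nat.mod_eq_of_lt hv₀] using hL₀)
    (fun v hv hv0 => hL _ (Nat.mod_lt _ (by omega)) (hne v hv hv0))
  exact ⟨_, hc.rotate hv₀⟩

section Greedy

variable {α : Type*} [DecidableEq α]

theorem exists_extension_of_demand {b : ℕ} {c' S' S P : Finset α} {d' d : ℤ}
    (hc' : #c' = b) (hd' : d' ≤ #(c' ∩ S')) (hP : 2 * b ≤ #P) (hSP : S ⊆ P)
    (hS : Disjoint S' S) (hd : d' + #S = d + b) (hdb : d ≤ b) :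
    ∃ c ⊆ P \ c', #c = b ∧ d ≤ #(c ∩ S) := by
  apply exists_subset_card_eq_le_card_inter _ _ hdb
  · have := le_card_sdiff c' P
    omega
  · have hPS : (P \ c') ∩ S = S \ c' := by
      rw [sdiff_inter_right_comm, inter_eq_right.2 hSP]
    have hsplit := card_sdiff_add_card_inter S c'
    have hc'S := card_inter_add_card_inter_le (s := c') hS
    rw [inter_comm S c'] at hsplit
    rw [hPS]
    omega

theorem exists_chain_of_demand (b : ℕ) (P S : ℕ → Finset α) (d : ℕ → ℤ) (c₀ : Finset α)
    (hc₀ : #c₀ = b) (hd₀ : d 0 ≤ #(c₀ ∩ S 0)) :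
    ∀ m, (∀ i < m, 2 * b ≤ #(P (i + 1))) → (∀ i < m, S (i + 1) ⊆ P (i + 1)) →
      (∀ i < m, Disjoint (S i) (S (i + 1))) → (∀ i < m, d i + #(S (i + 1)) = d (i + 1) + b) →
      (∀ i < m, d (i + 1) ≤ b) →
      ∃ c : ℕ → Finset α, c 0 = c₀ ∧ (∀ i ≤ m, #(c i) = b) ∧
        (∀ i < m, c (i + 1) ⊆ P (i + 1) ∧ Disjoint (c i) (c (i + 1))) ∧ d m ≤ #(c m ∩ S m)
  | 0, _, _, _, _, _ =>
    ⟨fun _ => c₀, rfl, fun _ _ => hc₀, fun _ h => absurd h (Nat.not_lt_zero _), hd₀⟩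
  | m + 1, hP, hSP, hS, hd, hdb => by
    obtain ⟨c, hc0, hcard, hstep, hdm⟩ := exists_chain_of_demand b P S d c₀ hc₀ hd₀ m
      (fun i hi => hP i (by omega)) (fun i hi => hSP i (by omega)) (fun i hi => hS i (by omega))
      (fun i hi => hd i (by omega)) (fun i hi => hdb i (by omega))
    obtain ⟨e, heP, he, hde⟩ := exists_extension_of_demand (hcard m le_rfl) hdm (hP m (by omega))
      (hSP m (by omega)) (hS m (by omega)) (hd m (by omega)) (hdb m (by omega))
    refine ⟨Function.update c (m + 1) e, by simp [hc0], fun i hi => ?_, fun i hi => ?_, by simpa⟩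
    · rcases hi.lt_or_eq with hi | rfl
      · simpa [Function.update_of_ne (show i ≠ m + 1 by omega)] using hcard i (by omega)
      · simpa using he
    · rcases (Nat.lt_succ_iff.1 hi).lt_or_eq with hi | rfl
      · simpa [Function.update_of_ne (show i ≠ m + 1 by omega),
          Function.update_of_ne (show i + 1 ≠ m + 1 by omega)] using hstep i hi
      · simp only [Function.update_self, Function.update_of_ne (show i ≠ i + 1 by omega)]
        exact ⟨heP.trans sdiff_subset, disjoint_sdiff.mono_right heP⟩

end Greedy

section Demand

variable {α : Type*} [DecidableEq α] (L : ℕ → Finset α) (n b : ℕ)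

/-- `demandSet L n t` and `demand L n b t` are the `S` and `d` of vertex `n - 1 - t`. -/
def demandSet : ℕ → Finset α
  | 0 => L (n - 1) \ L 0
  | t + 1 => L (n - (t + 2)) \ demandSet t

def demand (t : ℕ) : ℤ := (t + 1) * b - ∑ u ∈ range t, (#(demandSet L n u) : ℤ)

theorem demandSet_subset : ∀ t, demandSet L n t ⊆ L (n - (t + 1))
  | 0 => sdiff_subset
  | _ + 1 => sdiff_subset

theorem disjoint_demandSet_succ (t : ℕ) : Disjoint (demandSet L n t) (demandSet L n (t + 1)) :=
  disjoint_sdiff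

theorem card_le_card_demandSet_add_succ (t : ℕ) :
    #(L (n - (t + 2))) ≤ #(demandSet L n t) + #(demandSet L n (t + 1)) := by
  have := le_card_sdiff (demandSet L n t) (L (n - (t + 2)))
  rw [demandSet]
  omega

theorem demand_zero : demand L n b 0 = b := by simp [demand]

theorem demand_succ (t : ℕ) :
    demand L n b (t + 1) = demand L n b t + b - #(demandSet L n t) := by
  simp only [demand, sum_range_succ]
  push_cast
  ring

variable {L n b} {s : ℕ}

theorem add_le_card_demandSet_zero (hn : 2 ≤ n) (hL0 : #(L 0) = b)
    (hL : ∀ v, v < n → v ≠ 0 → #(L v) = 2 * b + s) : b + s ≤ #(demandSet L n 0) := by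
  have := le_card_sdiff (L 0) (L (n - 1))
  rw [hL (n - 1) (by omega) (by omega)] at this
  rw [demandSet]
  omega

theorem two_mul_add_le_card_demandSet_add_succ
    (hL : ∀ v, v < n → v ≠ 0 → #(L v) = 2 * b + s) {t : ℕ} (ht : t + 1 < n - 1) :
    2 * b + s ≤ #(demandSet L n t) + #(demandSet L n (t + 1)) :=
  hL (n - (t + 2)) (by omega) (by omega) ▸ card_le_card_demandSet_add_succ L n t

theorem demand_le (hn : 2 ≤ n) (hL0 : #(L 0) = b)
    (hL : ∀ v, v < n → v ≠ 0 → #(L v) = 2 * b + s) :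
    ∀ t, t ≤ n - 2 → demand L n b t ≤ b ∧ demand L n b t ≤ #(demandSet L n t)
  | 0, _ => by
    have := add_le_card_demandSet_zero hn hL0 hL
    rw [demand_zero]
    omega
  | t + 1, ht => by
    obtain ⟨h1, h2⟩ := demand_le hn hL0 hL t (by omega)
    have := two_mul_add_le_card_demandSet_add_succ hL (t := t) (by omega)
    rw [demand_succ]
    constructor <;> omega

theorem demand_nonpos (hn : 2 ≤ n) (hL0 : #(L 0) = b)
    (hL : ∀ v, v < n → v ≠ 0 → #(L v) = 2 * b + s) (hs : b ≤ n / 2 * s) :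
    demand L n b (n - 1) ≤ 0 := by
  have hsum := le_sum_range_of_le_add_succ (fun u => #(demandSet L n u)) (2 * b + s) (n - 1)
    fun t ht => two_mul_add_le_card_demandSet_add_succ hL ht
  have h0 := add_le_card_demandSet_zero hn hL0 hL
  have hpairs : n * b ≤ (n - 1) % 2 * #(demandSet L n 0) + (n - 1) / 2 * (2 * b + s) := by
    obtain ⟨k, rfl | rfl⟩ := Nat.even_or_odd' n
    · obtain ⟨j, rfl⟩ : ∃ j, k = j + 1 := ⟨k - 1, by omega⟩
      rw [show (2 * (j + 1) - 1) % 2 = 1 by omega, show (2 * (j + 1) - 1) / 2 = j by omega]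
      rw [show 2 * (j + 1) / 2 = j + 1 by omega] at hs
      nlinarith
    · rw [show (2 * k + 1 - 1) % 2 = 0 by omega, show (2 * k + 1 - 1) / 2 = k by omega]
      rw [show (2 * k + 1) / 2 = k by omega] at hs
      nlinarith
  have h := hpairs.trans hsum
  zify at h
  simp only [demand]
  push_cast [Nat.cast_sub (by omega : 1 ≤ n)] at h ⊢
  linarith

end Demand

theorem exists_isCycleColoring_of_le {α : Type*} [DecidableEq α] {n b s : ℕ} (hn : 2 ≤ n)
    {L : ℕ → Finset α} (hL0 : #(L 0) = b) (hL : ∀ v, v < n → v ≠ 0 → #(L v) = 2 * b + s)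
    (hs : b ≤ n / 2 * s) : ∃ c, IsCycleColoring n b L c := by
  have hflip (i : ℕ) (hi : i < n - 1) : n - 1 - i = n - 1 - (i + 1) + 1 := by omega
  obtain ⟨c, hc0, hcard, hstep, hend⟩ := exists_chain_of_demand b L
    (fun i => demandSet L n (n - 1 - i)) (fun i => demand L n b (n - 1 - i)) (L 0) hL0
    ((demand_nonpos hn hL0 hL hs).trans (Int.natCast_nonneg _)) (n - 1)
    (fun i hi => (hL (i + 1) (by omega) (by omega)).symm ▸ by omega)
    (fun i hi => by
      have := demandSet_subset L n (n - 1 - (i + 1))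
      rwa [show n - (n - 1 - (i + 1) + 1) = i + 1 by omega] at this)
    (fun i hi => by
      rw [hflip i hi]
      exact (disjoint_demandSet_succ L n _).symm)
    (fun i hi => by
      rw [hflip i hi, demand_succ]
      ring)
    (fun i hi => (demand_le hn hL0 hL _ (by omega)).1)
  simp only [Nat.sub_self, demand_zero] at hend
  have hlast : c (n - 1) ⊆ L (n - 1) \ L 0 := by
    have h := eq_of_subset_of_card_le (inter_subset_left (s₁ := c (n - 1)) (s₂ := demandSet L n 0))
      (by rw [hcard _ le_rfl]; exact_mod_cast hend)
    exact h ▸ inter_subset_right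
  refine ⟨c, fun i hi => ⟨?_, hcard i (by omega)⟩, fun i hi => ?_⟩
  · cases i with
    | zero => exact hc0.subset
    | succ j => exact (hstep j (by omega)).1
  · rcases Nat.lt_or_ge (i + 1) n with h | h
    · rw [Nat.mod_eq_of_lt h]
      exact (hstep i (by omega)).2
    · obtain rfl : i = n - 1 := by omega
      rw [Nat.sub_add_cancel (by omega), Nat.mod_self, hc0]
      exact disjoint_sdiff_self_left.mono_left hlast

theorem cycleFreeChoosable_of_le {n b s : ℕ} (hn : 2 ≤ n) (hs : b ≤ n / 2 * s) :
    CycleFreeChoosable n (2 * b + s) b :=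
  cycleFreeChoosable_of_forall_zero fun _ hL₀ hL => exists_isCycleColoring_of_le hn hL₀ hL hs

theorem two_mul_le_of_cycleFreeChoosable {n a b : ℕ} (hn : 3 ≤ n)
    (h : CycleFreeChoosable n a b) : 2 * b ≤ a := by
  obtain ⟨c, hc, hcc⟩ := h 0 (by omega) (fun v => if v = 0 then range b else range a)
    (by simp) (fun v _ hv => by simp [hv])
  have h12 := hcc 1 (by omega)
  rw [Nat.mod_eq_of_lt (by omega : 1 + 1 < n)] at h12
  have hsub : c 1 ∪ c 2 ⊆ range a := union_subset (by simpa using (hc 1 (by omega)).1)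
    (by simpa using (hc 2 (by omega)).1)
  have := card_le_card hsub
  rw [card_union_of_disjoint h12, (hc 1 (by omega)).2, (hc 2 (by omega)).2, card_range] at this
  omega

section Potential

variable {α : Type*} [DecidableEq α]

theorem card_inter_le_card_inter_add {c c' U V : Finset α} {b x : ℕ} (hcc : Disjoint c c')
    (hc' : #c' = b) (hsub : c' ⊆ U ∪ V) (hUV : Disjoint U V) (hU : #U ≤ b + x) :
    #(c ∩ U) ≤ #(c' ∩ V) + x := by
  have hc'UV := card_inter_add_card_inter_of_disjoint (s := c') hUV
  have hU' := card_inter_add_card_inter_le (s := U) hcc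
  rw [inter_eq_left.2 hsub] at hc'UV
  rw [inter_comm U, inter_comm U] at hU'
  omega

theorem card_inter_le_card_inter_add_sum (c W : ℕ → Finset α) (x : ℕ → ℕ) (b : ℕ) :
    ∀ m, (∀ i < m, Disjoint (c i) (c (i + 1))) → (∀ i < m, #(c (i + 1)) = b) →
      (∀ i < m, c (i + 1) ⊆ W i ∪ W (i + 1)) → (∀ i < m, Disjoint (W i) (W (i + 1))) →
      (∀ i < m, #(W i) ≤ b + x i) → #(c 0 ∩ W 0) ≤ #(c m ∩ W m) + ∑ i ∈ range m, x i
  | 0, _, _, _, _, _ => by simp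
  | m + 1, hcc, hc, hcW, hW, hx => by
    have ih := card_inter_le_card_inter_add_sum c W x b m (fun i hi => hcc i (by omega))
      (fun i hi => hc i (by omega)) (fun i hi => hcW i (by omega)) (fun i hi => hW i (by omega))
      (fun i hi => hx i (by omega))
    have hstep := card_inter_le_card_inter_add (hcc m (by omega)) (hc m (by omega))
      (hcW m (by omega)) (hW m (by omega)) (hx m (by omega))
    rw [sum_range_succ]
    omega

end Potential

def obstructionSet (n b s i : ℕ) : Finset ℕ :=
  if i + 1 < n then Ico (i * (2 * b + s)) (i * (2 * b + s) + b + i % 2 * s)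
  else if i + 1 = n then range (b + i % 2 * s) else ∅

def obstructionList (n b s v : ℕ) : Finset ℕ :=
  if v = 0 then obstructionSet n b s 0 else obstructionSet n b s (v - 1) ∪ obstructionSet n b s v

section Obstruction

variable {n b s : ℕ}

theorem card_obstructionSet {i : ℕ} (hi : i < n) :
    #(obstructionSet n b s i) = b + i % 2 * s := by
  unfold obstructionSet
  split_ifs <;> simp <;> omega

theorem disjoint_obstructionSet_succ (hn : 3 ≤ n) (i : ℕ) :
    Disjoint (obstructionSet n b s i) (obstructionSet n b s (i + 1)) := by
  unfold obstructionSet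
  rw [disjoint_left]
  intro x hx hx'
  have hmul : (i + 1) * (2 * b + s) = i * (2 * b + s) + (2 * b + s) := by ring
  have hle : i = 0 ∨ 2 * b + s ≤ i * (2 * b + s) :=
    (Nat.eq_zero_or_pos i).imp id fun hi => Nat.le_mul_of_pos_left _ hi
  have hi2 : i % 2 * s ≤ s := by
    simpa using Nat.mul_le_mul_right s (Nat.le_of_lt_succ (Nat.mod_lt i two_pos))
  have hi2' : (i + 1) % 2 * s ≤ s := by
    simpa using Nat.mul_le_mul_right s (Nat.le_of_lt_succ (Nat.mod_lt (i + 1) two_pos))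
  split_ifs at hx hx' <;> simp only [mem_Ico, mem_range, notMem_empty] at hx hx' <;> omega

theorem obstructionSet_zero_subset (hn : 2 ≤ n) :
    obstructionSet n b s 0 ⊆ obstructionSet n b s (n - 1) := by
  intro x hx
  unfold obstructionSet at hx ⊢
  simp only [show 0 + 1 < n by omega, show n - 1 + 1 = n by omega, if_true, lt_irrefl,
    if_false, mem_Ico, mem_range] at hx ⊢
  omega

theorem card_obstructionList (hn : 3 ≤ n) {v : ℕ} (hv : v < n) (hv0 : v ≠ 0) :
    #(obstructionList n b s v) = 2 * b + s := by
  have hdisj := disjoint_obstructionSet_succ (b := b) (s := s) hn (v - 1)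
  rw [Nat.sub_add_cancel (by omega)] at hdisj
  have hpar : (v - 1) % 2 + v % 2 = 1 := by omega
  rw [obstructionList, if_neg hv0, card_union_of_disjoint hdisj, card_obstructionSet (by omega),
    card_obstructionSet hv]
  nlinarith

end Obstruction

theorem le_mul_of_cycleFreeChoosable {n b s : ℕ} (hn : 3 ≤ n)
    (h : CycleFreeChoosable n (2 * b + s) b) : b ≤ n / 2 * s := by
  set W := obstructionSet n b s
  have hW0 : #(W 0) = b := by simpa using card_obstructionSet (b := b) (s := s) (by omega : 0 < n)
  obtain ⟨c, hc, hcc⟩ := h 0 (by omega) (obstructionList n b s) (by simpa [obstructionList])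
    fun v hv hv0 => card_obstructionList hn hv hv0
  have hc0 : c 0 = W 0 :=
    eq_of_subset_of_card_le (by simpa [obstructionList] using (hc 0 (by omega)).1)
      (by rw [hW0, (hc 0 (by omega)).2])
  have hchain := card_inter_le_card_inter_add_sum (fun i => c (i % n)) W (fun i => i % 2 * s) b n
    (fun i hi => by simpa only [Nat.mod_eq_of_lt hi] using hcc i hi)
    (fun i _ => (hc _ (Nat.mod_lt _ (by omega))).2)
    (fun i hi => by
      rcases Nat.lt_or_ge (i + 1) n with h' | h'
      · simpa [Nat.mod_eq_of_lt h', obstructionList] using (hc (i + 1) h').1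
      · obtain rfl : i = n - 1 := by omega
        rw [Nat.sub_add_cancel (by omega), Nat.mod_self, hc0]
        exact subset_union_left.trans' (obstructionSet_zero_subset (by omega)))
    (fun i _ => disjoint_obstructionSet_succ hn i)
    (fun i hi => (card_obstructionSet hi).le)
  have hWn : W n = ∅ := by simp [W, obstructionSet]
  simpa [hc0, hW0, hWn, ← sum_mul, sum_range_mod_two] using hchain

theorem cycleFreeChoosable_iff {n a b : ℕ} (hn : 3 ≤ n) :
    CycleFreeChoosable n a b ↔ (2 * (n / 2) + 1) * b ≤ n / 2 * a := by
  constructor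
  · intro h
    obtain ⟨s, rfl⟩ := Nat.exists_eq_add_of_le (two_mul_le_of_cycleFreeChoosable hn h)
    have := le_mul_of_cycleFreeChoosable hn h
    nlinarith
  · intro h
    have hab : 2 * b ≤ a := by nlinarith [show 1 ≤ n / 2 by omega]
    obtain ⟨s, rfl⟩ := Nat.exists_eq_add_of_le hab
    exact cycleFreeChoosable_of_le (by omega) (by nlinarith)

theorem two_add_inv_le_div_iff {k a b : ℕ} (hk : 0 < k) (hb : 0 < b) :
    2 + (k : ℝ)⁻¹ ≤ a / b ↔ (2 * k + 1) * b ≤ k * a := by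
  have hk' : (0 : ℝ) < k := by exact_mod_cast hk
  have hb' : (0 : ℝ) < b := by exact_mod_cast hb
  rw [show 2 + (k : ℝ)⁻¹ = (2 * k + 1) / k by field_simp, div_le_div_iff₀ hk' hb',
    mul_comm (a : ℝ)]
  exact_mod_cast Iff.rfl

/-- The free-choice ratio of the cycle `C_n` is `2 + 1/⌊n/2⌋`, and every pair `(a,b)` with
`a/b ≥ 2 + 1/⌊n/2⌋` witnesses free-choosability. -/
theorem cycle_free_choice_ratio (n : ℕ) (hn : 3 ≤ n) :
    sInf {q : ℝ | ∃ a b : ℕ, 0 < b ∧ q = (a : ℝ) / (b : ℝ) ∧ CycleFreeChoosable n a b} =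
        2 + ((n / 2 : ℕ) : ℝ)⁻¹ ∧
      ∀ a b : ℕ, 0 < b → 2 + ((n / 2 : ℕ) : ℝ)⁻¹ ≤ (a : ℝ) / (b : ℝ) →
        CycleFreeChoosable n a b := by
  have hk : 0 < n / 2 := by omega
  have key (a b : ℕ) (hb : 0 < b) :
      CycleFreeChoosable n a b ↔ 2 + ((n / 2 : ℕ) : ℝ)⁻¹ ≤ a / b := by
    rw [cycleFreeChoosable_iff hn, two_add_inv_le_div_iff hk hb]
  refine ⟨IsLeast.csInf_eq ⟨⟨2 * (n / 2) + 1, n / 2, hk, ?_, ?_⟩, ?_⟩,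
    fun a b hb => (key a b hb).2⟩
  · have : ((n / 2 : ℕ) : ℝ) ≠ 0 := by positivity
    push_cast
    field_simp
  · rw [cycleFreeChoosable_iff hn, mul_comm]
  · rintro q ⟨a, b, hb, rfl, h⟩
    exact (key a b hb).1 h
end

section
/- Let L be a list assignment on the path 0,...,n and suppose a color x satisfies x ∈ L(i−1) and x ∉ L(i) for some 1 ≤ i ≤ n−1. Let L' be obtained from L by replacing x with a fresh color y ∉ ⋃_k L(k) in every list L(j) with j > i. Then for any weight w, the path is (L,w)-colorable if and only if it is (L',w)-colorable. -/
def sw (x y : ℕ) (s : Finset ℕ) : Finset ℕ :=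
  if x ∈ s then insert y (s.erase x) else s

lemma sw_card {x y : ℕ} {s : Finset ℕ} (hy : y ∉ s) : (sw x y s).card = s.card := by
  unfold sw
  split_ifs with h
  · rw [Finset.card_insert_of_notMem (fun hc => hy (Finset.mem_of_mem_erase hc)),
      Finset.card_erase_of_mem h]
    have := Finset.card_pos.mpr ⟨x, h⟩
    omega
  · rfl

lemma mem_sw_ne {a x y : ℕ} {s : Finset ℕ} (h : a ∈ sw x y s) (hay : a ≠ y) : a ∈ s := by
  unfold sw at h
  split_ifs at h with h1
  · simp only [Finset.mem_insert, Finset.mem_erase, hay, false_or] at h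
    exact h.2
  · exact h

lemma y_mem_sw {x y : ℕ} {s : Finset ℕ} (h : y ∈ sw x y s) (hy : y ∉ s) : x ∈ s := by
  unfold sw at h
  split_ifs at h with h1
  · exact h1
  · exact absurd h hy

lemma sw_disj {x y : ℕ} {s t : Finset ℕ} (hys : y ∉ s) (hyt : y ∉ t)
    (h : Disjoint s t) : Disjoint (sw x y s) (sw x y t) := by
  rw [Finset.disjoint_left] at h ⊢
  intro a ha hb
  by_cases hay : a = y
  · subst hay
    exact h (y_mem_sw ha hys) (y_mem_sw hb hyt)
  · exact h (mem_sw_ne ha hay) (mem_sw_ne hb hay)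

lemma sw_disj_right {x y : ℕ} {s t : Finset ℕ} (hys : y ∉ s)
    (h : Disjoint s t) : Disjoint s (sw x y t) := by
  rw [Finset.disjoint_left] at h ⊢
  intro a ha hb
  by_cases hay : a = y
  · exact hys (hay ▸ ha)
  · exact h ha (mem_sw_ne hb hay)

/-- Replacing a color `x` (absent from `L i` but present in `L (i-1)`) by a fresh color `y`
in every list `L j` with `j > i` preserves the colorability of the weighted path. -/
theorem replace_color_similar (n : ℕ) (L : ℕ → Finset ℕ) (w : ℕ → ℕ) (x y i : ℕ)
    (hi1 : 1 ≤ i) (hi2 : i ≤ n - 1)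
    (hx1 : x ∈ L (i - 1)) (hx2 : x ∉ L i)
    (hy : ∀ k, k ≤ n → y ∉ L k)
    (L' : ℕ → Finset ℕ)
    (hL'le : ∀ j, j ≤ i → L' j = L j)
    (hL'gt : ∀ j, i < j →
      L' j = if x ∈ L j then insert y ((L j).erase x) else L j) :
    (∃ c : ℕ → Finset ℕ, (∀ k, k ≤ n → c k ⊆ L k ∧ (c k).card = w k) ∧
        ∀ k, k < n → Disjoint (c k) (c (k + 1))) ↔
      (∃ c : ℕ → Finset ℕ, (∀ k, k ≤ n → c k ⊆ L' k ∧ (c k).card = w k) ∧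
        ∀ k, k < n → Disjoint (c k) (c (k + 1))) := by
  have hn2 : 2 ≤ n := by omega
  have hin : i ≤ n := by omega
  have hxy : x ≠ y := by
    rintro rfl
    exact hy (i - 1) (by omega) hx1
  have hxL' : ∀ k, i < k → x ∉ L' k := by
    intro k hk
    rw [hL'gt k hk]
    split_ifs with h
    · simp [hxy, Finset.mem_erase]
    · exact h
  constructor
  · rintro ⟨c, hc1, hc2⟩
    have hyc : ∀ k, k ≤ n → y ∉ c k := fun k hk h => hy k hk ((hc1 k hk).1 h)
    refine ⟨fun j => if i < j then sw x y (c j) else c j, ?_, ?_⟩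
    · intro k hk
      dsimp only
      split_ifs with h
      · constructor
        · rw [hL'gt k h]
          unfold sw
          split_ifs with h1 h2 h2
          · exact Finset.insert_subset_insert _ (Finset.erase_subset_erase _ (hc1 k hk).1)
          · exact absurd ((hc1 k hk).1 h1) h2
          · intro a ha
            simp only [Finset.mem_insert, Finset.mem_erase]
            right
            exact ⟨fun he => h1 (he ▸ ha), (hc1 k hk).1 ha⟩
          · exact (hc1 k hk).1
        · rw [sw_card (hyc k hk)]; exact (hc1 k hk).2
      · rw [hL'le k (by omega)]
        exact hc1 k hk
    · intro k hk
      dsimp only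
      rcases lt_trichotomy k i with h | rfl | h
      · simp only [if_neg (by omega : ¬ i < k), if_neg (by omega : ¬ i < k+1)]
        exact hc2 k hk
      · simp only [if_neg (lt_irrefl k), if_pos (Nat.lt_succ_self k)]
        exact sw_disj_right (hyc k (by omega)) (hc2 k hk)
      · simp only [if_pos h, if_pos (by omega : i < k+1)]
        exact sw_disj (hyc k (by omega)) (hyc (k+1) (by omega)) (hc2 k hk)
  · rintro ⟨c, hc1, hc2⟩
    have hxc : ∀ k, i < k → k ≤ n → x ∉ c k := fun k hk hkn h =>
      hxL' k hk ((hc1 k hkn).1 h)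
    refine ⟨fun j => if i < j then sw y x (c j) else c j, ?_, ?_⟩
    · intro k hk
      dsimp only
      split_ifs with h
      · constructor
        · have hyLk : y ∉ L k := hy k hk
          have hsub : c k ⊆ L' k := (hc1 k hk).1
          rw [hL'gt k h] at hsub
          unfold sw
          split_ifs with h1
          · have hyL' : y ∈ (if x ∈ L k then insert y ((L k).erase x) else L k) :=
              hsub h1
            by_cases hxL : x ∈ L k
            · rw [if_pos hxL] at hsub
              intro a ha
              simp only [Finset.mem_insert, Finset.mem_erase] at ha
              rcases ha with rfl | ⟨ha1, ha2⟩
              · exact hxL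
              · have := hsub ha2
                simp only [Finset.mem_insert, Finset.mem_erase] at this
                rcases this with rfl | ⟨_, hb⟩
                · exact absurd rfl ha1
                · exact hb
            · rw [if_neg hxL] at hyL'
              exact absurd hyL' hyLk
          · by_cases hxL : x ∈ L k
            · rw [if_pos hxL] at hsub
              intro a ha
              have := hsub ha
              simp only [Finset.mem_insert, Finset.mem_erase] at this
              rcases this with rfl | ⟨_, hb⟩
              · exact absurd ha h1
              · exact hb
            · rw [if_neg hxL] at hsub
              exact hsub
        · rw [sw_card (hxc k h hk)]; exact (hc1 k hk).2
      · rw [← hL'le k (by omega)]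
        exact hc1 k hk
    · intro k hk
      dsimp only
      rcases lt_trichotomy k i with h | rfl | h
      · simp only [if_neg (by omega : ¬ i < k), if_neg (by omega : ¬ i < k+1)]
        exact hc2 k hk
      · simp only [if_neg (lt_irrefl k), if_pos (Nat.lt_succ_self k)]
        have h2 : x ∉ c k := fun hm => hx2 ((hL'le k le_rfl ▸ (hc1 k (by omega)).1) hm)
        exact sw_disj_right h2 (hc2 k hk)
      · simp only [if_pos h, if_pos (by omega : i < k+1)]
        exact sw_disj (hxc k h (by omega)) (hxc (k+1) (by omega) (by omega)) (hc2 k hk)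
end
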